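/- arXiv:0908.3407 — 11 statements merged into one kernel-verified Lean document; each statement's English description precedes it below -/
import Mathlib

section
/- Let S ⊆ Z/(2k-1) with k ≥ 2. If the complement of S does not contain any three residues i₁,i₂,i₃ such that the corresponding vertices of a regular (2k-1)-gon form a triangle containing the center in its relative interior, then S contains k-1 consecutive residues (mod 2k-1). -/
/-!
Suppose `S` contains no `k - 1` consecutive residues. Then from every residue `a` some step
`g ∈ [1, k - 1]` leads out of `S`. Start at `a ∉ S`, take the longest such step `g₁` to `b`, then
any such step `g₂` from `b` to `c`. Maximality of `g₁` forces `g₁ + g₂ ≥ k`, so the remaining arc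
from `c` back to `a` has length `2k - 1 - (g₁ + g₂) ∈ [1, k - 1]`: the triangle `a b c` lies in the
complement of `S` and contains the centre.
-/

def IsCenteredTriangle {m : ℕ} (k : ℕ) (a b c : ZMod m) : Prop :=
  (1 ≤ (b - a).val ∧ (b - a).val ≤ k - 1) ∧
  (1 ≤ (c - b).val ∧ (c - b).val ≤ k - 1) ∧
  (1 ≤ (a - c).val ∧ (a - c).val ≤ k - 1)

theorem isCenteredTriangle_add_add {k m : ℕ} (hm : m = 2 * k - 1) (a : ZMod m) {g₁ g₂ : ℕ}
    (hg₁ : 1 ≤ g₁) (hg₁' : g₁ ≤ k - 1) (hg₂ : 1 ≤ g₂) (hg₂' : g₂ ≤ k - 1)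
    (hsum : k ≤ g₁ + g₂) :
    IsCenteredTriangle k a (a + g₁) (a + g₁ + g₂) := by
  have hback : a - (a + g₁ + g₂) = ((m - (g₁ + g₂) : ℕ) : ZMod m) := by
    rw [Nat.cast_sub (by omega), ZMod.natCast_self]
    push_cast
    ring
  unfold IsCenteredTriangle
  rw [add_sub_cancel_left, add_sub_cancel_left, hback, ZMod.val_natCast_of_lt (by omega),
    ZMod.val_natCast_of_lt (by omega), ZMod.val_natCast_of_lt (by omega)]
  omega

theorem exists_step_notMem_of_forall_window {R : Type*} [AddMonoidWithOne R] {S : Set R} {n : ℕ}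
    (hS : ∀ i : R, ∃ j < n, i + (j : R) ∉ S) (a : R) :
    ∃ g : ℕ, 1 ≤ g ∧ g ≤ n ∧ a + (g : R) ∉ S := by
  obtain ⟨j, hj, hjS⟩ := hS (a + 1)
  refine ⟨1 + j, by omega, by omega, ?_⟩
  rwa [Nat.cast_add, Nat.cast_one, ← add_assoc]

theorem exists_greatest_step_notMem {R : Type*} [AddMonoidWithOne R] {S : Set R} {n : ℕ} {a : R}
    (h : ∃ g : ℕ, 1 ≤ g ∧ g ≤ n ∧ a + (g : R) ∉ S) :
    ∃ g : ℕ, (1 ≤ g ∧ g ≤ n ∧ a + (g : R) ∉ S) ∧ ∀ g' : ℕ, g < g' → g' ≤ n → a + (g' : R) ∈ S := by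
  classical
  obtain ⟨g, hg, hgn, hgS⟩ := h
  set P : ℕ → Prop := fun g => 1 ≤ g ∧ a + (g : R) ∉ S
  have hspec : P (Nat.findGreatest P n) := Nat.findGreatest_spec hgn ⟨hg, hgS⟩
  refine ⟨Nat.findGreatest P n, ⟨hspec.1, Nat.findGreatest_le n, hspec.2⟩, fun g' hlt hg'n => ?_⟩
  by_contra hg'S
  exact Nat.findGreatest_is_greatest hlt hg'n ⟨by omega, hg'S⟩

theorem no_center_triangle_in_complement_general (k m : ℕ)
    (hm : m = 2 * k - 1) (S : Set (ZMod m))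
    (h : ¬ ∃ a b c : ZMod m,
        a ∉ S ∧ b ∉ S ∧ c ∉ S ∧
        (1 ≤ (b - a).val ∧ (b - a).val ≤ k - 1) ∧
        (1 ≤ (c - b).val ∧ (c - b).val ≤ k - 1) ∧
        (1 ≤ (a - c).val ∧ (a - c).val ≤ k - 1)) :
    ∃ i : ZMod m, ∀ j : ℕ, j < k - 1 → i + (j : ZMod m) ∈ S := by
  by_contra! hwindow
  have hstep := exists_step_notMem_of_forall_window hwindow
  obtain ⟨j₀, -, haS⟩ := hwindow 0
  rw [zero_add] at haS
  obtain ⟨g₁, ⟨hg₁, hg₁', hbS⟩, hmax⟩ := exists_greatest_step_notMem (hstep (j₀ : ZMod m))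
  obtain ⟨g₂, hg₂, hg₂', hcS⟩ := hstep (j₀ + g₁)
  have hsum : k ≤ g₁ + g₂ := by
    by_contra! hlt
    refine hcS ?_
    simpa only [Nat.cast_add, add_assoc] using hmax (g₁ + g₂) (by omega) (by omega)
  exact h ⟨_, _, _, haS, hbS, hcS, isCenteredTriangle_add_add hm _ hg₁ hg₁' hg₂ hg₂' hsum⟩

/-- Let `S ⊆ ZMod (2k-1)`, `k ≥ 2`.  A triangle on three vertices `a, b, c` of the regular
`(2k-1)`-gon contains the center in its relative interior iff the three cyclic gaps
`(b-a).val, (c-b).val, (a-c).val` are all between `1` and `k-1`.  If the complement of `S`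
contains no such triangle, then `S` contains `k-1` consecutive residues. -/
theorem no_center_triangle_in_complement (k m : ℕ) [NeZero m] (hk : 2 ≤ k)
    (hm : m = 2 * k - 1) (S : Set (ZMod m))
    (h : ¬ ∃ a b c : ZMod m,
        a ∉ S ∧ b ∉ S ∧ c ∉ S ∧
        (1 ≤ (b - a).val ∧ (b - a).val ≤ k - 1) ∧
        (1 ≤ (c - b).val ∧ (c - b).val ≤ k - 1) ∧
        (1 ≤ (a - c).val ∧ (a - c).val ≤ k - 1)) :
    ∃ i : ZMod m, ∀ j : ℕ, j < k - 1 → i + (j : ZMod m) ∈ S :=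
  no_center_triangle_in_complement_general k m hm S h
end

section
/- Let P be an n-dimensional simple polytope with m facets and let s(P) denote its Buchstaber number, defined combinatorially as the maximal s such that there exists a map λ from the facet set to Z^{m-s} so that for every vertex v = F_{i₁} ∩ ... ∩ F_{i_n}, the vectors λ(F_{i₁}),...,λ(F_{i_n}) extend to a basis of Z^{m-s}. Then s(P) ≥ ⌊m/(n+1)⌋. -/
/-- A family of vectors is part of a basis if it can be extended to a basis. -/
def IsPartOfBasis (R : Type) [Semiring R] {M : Type} [AddCommMonoid M] [Module R M]
    {ι : Type} (v : ι → M) : Prop :=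
  ∃ (κ : Type) (b : Module.Basis (ι ⊕ κ) R M), ∀ i, b (Sum.inl i) = v i

/-!
Let `a = ⌊m / (n + 1)⌋`, so that `n a ≤ m - a`. Send the first `a` facets to the columns of `n`
stacked copies of `I_a` (padded by zero rows) and the other `m - a` facets to the standard basis
of `ℤ^{m-a}`. Among at most `n` of these columns, each block column has a row in its block (its
pivot) that is not the row of any chosen standard column, as at most `n - 1` of those are chosen.
Every chosen column is then `e_pivot + w`, where `w = 0` for standard columns and `w` vanishes at
all pivots for block columns. Hence `S x = ∑ x_pivot • w` satisfies `S² = 0`, and `1 + S` is an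
automorphism of `ℤ^{m-a}` sending the pivot basis vectors to the chosen columns.
-/

open Function

theorem Module.Basis.isPartOfBasis_comp {R M ι κ : Type} [Semiring R] [AddCommMonoid M]
    [Module R M] (b : Module.Basis κ R M) {ρ : ι → κ} (hρ : Function.Injective ρ) :
    IsPartOfBasis R (b ∘ ρ) := by
  classical
  let e : ι ⊕ ↥(Set.range ρ)ᶜ ≃ κ :=
    (Equiv.sumCongr (Equiv.ofInjective ρ hρ) (Equiv.refl _)).trans (Equiv.Set.sumCompl _)
  exact ⟨_, b.reindex e.symm, fun i => by simp [e]⟩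

theorem isPartOfBasis_of_eq_single_add {R K ι : Type} [Ring R] [Finite K] [DecidableEq K]
    [Fintype ι] {v w : ι → K → R} {ρ : ι → K} (hρ : Injective ρ)
    (hv : ∀ x, v x = Pi.single (ρ x) 1 + w x) (hw : ∀ x y, w x (ρ y) • w y = 0) :
    IsPartOfBasis R v := by
  let S : Module.End R (K → R) := ∑ y, (LinearMap.proj (ρ y)).smulRight (w y)
  have hS : ∀ z, S z = ∑ y, z (ρ y) • w y := fun z => by simp [S]
  have hSS : S * S = 0 := LinearMap.ext fun z => by
    simp only [Module.End.mul_apply, hS, Finset.sum_apply, Pi.smul_apply, smul_eq_mul,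
      Finset.sum_smul, mul_smul, hw, smul_zero, Finset.sum_const_zero, LinearMap.zero_apply]
  have hS_single : ∀ x, S (Pi.single (ρ x) 1) = w x := fun x => by
    rw [hS, Finset.sum_eq_single x (fun y _ hyx => by simp [hρ.ne hyx]) (by simp)]
    simp
  have hunit : IsUnit (1 + S) := IsNilpotent.isUnit_one_add ⟨2, by rw [sq, hSS]⟩
  let φ := LinearEquiv.ofBijective (1 + S) ((Module.End.isUnit_iff _).1 hunit)
  have hb : (Pi.basisFun R K).map φ ∘ ρ = v := funext fun x => by
    simp [φ, hS_single, hv]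
  exact hb ▸ ((Pi.basisFun R K).map φ).isPartOfBasis_comp hρ

section BlockColumns

variable {A K : Type} {n : ℕ}

def blockColumn (R : Type) [Semiring R] [DecidableEq K] (β : A × Fin n → K) : A ⊕ K → K → R
  | .inl i => ∑ k, Pi.single (β (i, k)) 1
  | .inr r => Pi.single r 1

variable {β : A × Fin n → K} {ι : Type} [Fintype ι] {c : ι → A ⊕ K}

theorem exists_block_row_forall_ne_inr (hβ : Injective β) (hι : Fintype.card ι ≤ n)
    {x : ι} {i : A} (hx : c x = .inl i) : ∃ k, ∀ y, c y ≠ .inr (β (i, k)) := by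
  by_contra! h
  choose f hf using h
  have hf_inj : Injective f := fun k l hkl => by
    simpa using congrArg Prod.snd (hβ (Sum.inr_injective ((hf k).symm.trans (hkl ▸ hf l))))
  have hx_notMem : x ∉ Set.range f := by
    rintro ⟨k, rfl⟩
    simp [hf] at hx
  simpa using (Fintype.card_lt_of_injective_of_notMem f hf_inj hx_notMem).trans_le hι

theorem isPartOfBasis_blockColumn_comp {R : Type} [Ring R] [Finite K] [DecidableEq K]
    (hβ : Injective β) (hc : Injective c) (hι : Fintype.card ι ≤ n) :
    IsPartOfBasis R (blockColumn R β ∘ c) := by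
  have hpivot : ∀ x, ∃ k : Fin n, ∀ i, c x = .inl i → ∀ y, c y ≠ .inr (β (i, k)) := by
    intro x
    cases hx : c x with
    | inl i =>
      obtain ⟨k, hk⟩ := exists_block_row_forall_ne_inr hβ hι hx
      exact ⟨k, fun j hj => by cases hj; exact hk⟩
    | inr r => exact ⟨⟨0, (Fintype.card_pos_iff.2 ⟨x⟩).trans_le hι⟩, by simp⟩
  choose k hk using hpivot
  let ρ : ι → K := fun x => (c x).elim (fun i => β (i, k x)) id
  let w : ι → K → R := fun x =>
    (c x).elim (fun i => ∑ l ∈ Finset.univ.erase (k x), Pi.single (β (i, l)) 1) 0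
  have hρ : Injective ρ := by
    intro x y hxy
    rcases hx : c x with i | r <;> rcases hy : c y with j | s <;>
      simp only [ρ, hx, hy, Sum.elim_inl, Sum.elim_inr, id] at hxy
    · obtain rfl : i = j := congrArg Prod.fst (hβ hxy)
      exact hc (hx.trans hy.symm)
    · exact absurd hy (hxy ▸ hk x _ hx y)
    · exact absurd hx (hxy ▸ hk y _ hy x)
    · exact hc (hx.trans (hxy ▸ hy.symm))
  have hv : ∀ x, blockColumn R β (c x) = Pi.single (ρ x) 1 + w x := by
    intro x
    cases hx : c x <;> simp [blockColumn, ρ, w, hx]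
  have hw : ∀ x y, w x (ρ y) • w y = 0 := by
    intro x y
    cases hy : c y with
    | inr r => simp [w, hy]
    | inl j =>
      suffices w x (β (j, k y)) = 0 by simp [ρ, hy, this]
      cases hx : c x with
      | inr r => simp [w, hx]
      | inl i =>
        simp only [w, hx, Sum.elim_inl, Finset.sum_apply]
        refine Finset.sum_eq_zero fun l hl => Pi.single_eq_of_ne (fun h => ?_) _
        obtain ⟨rfl, rfl⟩ := Prod.ext_iff.1 (hβ h)
        obtain rfl : y = x := hc (hy.trans hx.symm)
        simp at hl
  exact isPartOfBasis_of_eq_single_add hρ hv hw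

end BlockColumns

theorem buchstaber_ge_m_div_n_add_one_general (m n : ℕ)
    (verts : Finset (Finset (Fin m)))
    (hcard : ∀ V ∈ verts, V.card = n) :
    m / (n + 1) ≤ sSup {s : ℕ | s ≤ m ∧ ∃ lam : Fin m → (Fin (m - s) → ℤ),
      ∀ V ∈ verts, IsPartOfBasis ℤ (fun i : {x // x ∈ V} => lam i.1)} := by
  set a := m / (n + 1)
  have ha : a ≤ m := Nat.div_le_self m (n + 1)
  have hna : n * a ≤ m - a := by
    have : a * (n + 1) ≤ m := Nat.div_mul_le_self m (n + 1)
    exact Nat.le_sub_of_add_le (by linarith)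
  -- `β (i, k) = k a + i`: the `k`-th copy of `I_a` occupies rows `k a, …, k a + a - 1`.
  let β : Fin a × Fin n → Fin (m - a) := fun p => Fin.castLE hna (finProdFinEquiv p.swap)
  have hβ : Injective β :=
    (Fin.castLE_injective hna).comp (finProdFinEquiv.injective.comp Prod.swap_injective)
  let e : Fin m ≃ Fin a ⊕ Fin (m - a) :=
    (finCongr (Nat.add_sub_of_le ha).symm).trans finSumFinEquiv.symm
  refine le_csSup ⟨m, fun s hs => hs.1⟩ ⟨ha, fun x => blockColumn ℤ β (e x), fun V hV => ?_⟩
  exact isPartOfBasis_blockColumn_comp hβ (e.injective.comp Subtype.val_injective)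
    (by simp [hcard V hV])

/-- The Buchstaber number of a simple `n`-polytope with `m` facets, described by its
vertex set `verts` (a vertex is the set of the `n` facets containing it): the maximal
`s ≤ m` such that there is a map `λ : facets → ℤ^{m-s}` sending the facets through each
vertex to a family extending to a basis of `ℤ^{m-s}`.  It is at least `⌊m/(n+1)⌋`. -/
theorem buchstaber_ge_m_div_n_add_one (m n : ℕ) (hn : 0 < n) (hm : n < m)
    (verts : Finset (Finset (Fin m))) (hne : verts.Nonempty)
    (hcard : ∀ V ∈ verts, V.card = n) :
    m / (n + 1) ≤ sSup {s : ℕ | s ≤ m ∧ ∃ lam : Fin m → (Fin (m - s) → ℤ),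
      ∀ V ∈ verts, IsPartOfBasis ℤ (fun i : {x // x ∈ V} => lam i.1)} :=
  buchstaber_ge_m_div_n_add_one_general m n verts hcard
end

section
/- Let m, n be positive integers with m > n, and suppose there exists an m × 2 matrix over F₂ with no zero rows such that every (m-n)-element subset of rows has rank 2. Then m ≥ (3/2)(n+1), i.e., 2m ≥ 3(n+1). Conversely, if 2m ≥ 3(n+1), such a matrix exists. -/
/-!
Over `F₂` two distinct nonzero vectors of the plane are independent, so a set of nonzero rows spans
`F₂²` exactly when it contains two different rows. The condition therefore says that no nonzero
vector labels `m - n` rows, i.e. each of the three labels at most `m - n - 1` of them. Such a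
labelling of `m` rows exists iff `m ≤ 3 (m - n - 1)`: by pigeonhole in one direction, and by
embedding the rows into `{nonzero vectors} × Fin (m - n - 1)` in the other.
-/

open Module Submodule Finset

theorem Set.Subsingleton.span_ne_top {K V : Type*} [DivisionRing K] [AddCommGroup V] [Module K V]
    {s : Set V} (hs : s.Subsingleton) (h : 1 < finrank K V) : span K s ≠ ⊤ := by
  obtain ⟨v, hv⟩ : ∃ v, s ⊆ {v} := by
    rcases hs.eq_empty_or_singleton with rfl | ⟨v, rfl⟩
    exacts [⟨0, Set.empty_subset _⟩, ⟨v, subset_rfl⟩]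
  intro htop
  have hle := finrank_span_le_card (R := K) ({v} : Set V)
  rw [eq_top_iff.mpr (htop.symm.le.trans (span_mono hv)), finrank_top] at hle
  simp only [Set.toFinset_singleton, Finset.card_singleton] at hle
  omega

section

variable {V : Type*} [AddCommGroup V] [Module (ZMod 2) V]

theorem ZModModule.linearIndependent_pair {u v : V} (hu : u ≠ 0) (hv : v ≠ 0) (huv : u ≠ v) :
    LinearIndependent (ZMod 2) ![u, v] := by
  have huv' : u + v ≠ 0 := by rwa [Ne, add_eq_zero_iff_eq_neg, ZModModule.neg_eq_self]
  have h01 : ∀ c : ZMod 2, c = 0 ∨ c = 1 := by decide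
  rw [LinearIndependent.pair_iff]
  intro s t hst
  rcases h01 s with rfl | rfl <;> rcases h01 t with rfl | rfl <;> simp_all

theorem ZModModule.span_eq_top_iff_nontrivial (hV : finrank (ZMod 2) V = 2) {s : Set V}
    (hs : 0 ∉ s) : span (ZMod 2) s = ⊤ ↔ s.Nontrivial := by
  refine ⟨fun htop => ?_, fun ⟨u, hu, v, hv, huv⟩ => ?_⟩
  · by_contra hsub
    exact (Set.not_nontrivial_iff.mp hsub).span_ne_top (by omega) htop
  · have hpair : span (ZMod 2) {u, v} = ⊤ := by
      rw [← Matrix.range_cons_cons_empty u v ![]]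
      refine (linearIndependent_pair (ne_of_mem_of_not_mem hu hs) (ne_of_mem_of_not_mem hv hs)
        huv).span_eq_top_of_card_eq_finrank ?_
      simp [hV]
    exact top_unique (hpair ▸ span_mono (Set.insert_subset hu (Set.singleton_subset_iff.mpr hv)))

end

section

variable {ι α : Type*} [Fintype ι] [DecidableEq α]

theorem forall_card_eq_succ_image_nontrivial_iff (f : ι → α) (k : ℕ) :
    (∀ S : Finset ι, #S = k + 1 → (f '' S).Nontrivial) ↔ ∀ a, #{i | f i = a} ≤ k := by
  constructor
  · intro h a
    by_contra! hlt
    obtain ⟨S, hS, hcard⟩ := exists_subset_card_eq (Nat.succ_le_of_lt hlt)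
    obtain ⟨_, ⟨i, hi, rfl⟩, _, ⟨j, hj, rfl⟩, hne⟩ := h S hcard
    exact hne (((mem_filter.mp (hS hi)).2).trans (mem_filter.mp (hS hj)).2.symm)
  · intro h S hS
    by_contra hsub
    obtain ⟨i₀, hi₀⟩ := card_pos.mp (by rw [hS]; exact k.succ_pos)
    have hfiber : S ⊆ ({i | f i = f i₀} : Finset ι) := fun i hi =>
      mem_filter.mpr ⟨mem_univ i, Set.not_nontrivial_iff.mp hsub
        (Set.mem_image_of_mem f hi) (Set.mem_image_of_mem f hi₀)⟩
    have hle := (card_le_card hfiber).trans (h (f i₀))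
    omega

theorem exists_mapsTo_card_fiber_le_iff (T : Finset α) (k : ℕ) :
    (∃ f : ι → α, (∀ i, f i ∈ T) ∧ ∀ a, #{i | f i = a} ≤ k) ↔ Fintype.card ι ≤ k * #T := by
  constructor
  · rintro ⟨f, hfT, hf⟩
    exact card_le_mul_card_image_of_maps_to (fun i _ => hfT i) k (fun a _ => hf a)
  · intro h
    obtain ⟨e⟩ : Nonempty (ι ↪ T × Fin k) :=
      Function.Embedding.nonempty_of_card_le (by simpa [mul_comm] using h)
    refine ⟨fun i => (e i).1, fun i => (e i).1.2, fun a => ?_⟩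
    calc #{i | ((e i).1 : α) = a} ≤ #(univ : Finset (Fin k)) :=
        card_le_card_of_injOn (fun i => (e i).2) (fun _ _ => mem_univ _) ?_
      _ = k := by simp
    intro i hi j hj hij
    simp only [coe_filter, Set.mem_ofPred_eq, mem_univ, true_and] at hi hj
    exact e.injective (Prod.ext (Subtype.ext (hi.trans hj.symm)) hij)

end

theorem exists_rank_two_matrix_iff_general (m n : ℕ) (hm : n < m) :
    (∃ M : Fin m → Fin 2 → ZMod 2, (∀ i, M i ≠ 0) ∧
        ∀ S : Finset (Fin m), S.card = m - n →
          Submodule.span (ZMod 2) (M '' (S : Set (Fin m))) = ⊤) ↔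
      3 * (n + 1) ≤ 2 * m := by
  obtain ⟨k, hk⟩ : ∃ k, m - n = k + 1 := ⟨m - n - 1, by omega⟩
  have hV : finrank (ZMod 2) (Fin 2 → ZMod 2) = 2 := by simp
  have hT : #({0}ᶜ : Finset (Fin 2 → ZMod 2)) = 3 := by decide
  calc _ ↔ ∃ M : Fin m → Fin 2 → ZMod 2, (∀ i, M i ∈ ({0}ᶜ : Finset _)) ∧
          ∀ v, #{i | M i = v} ≤ k := by
        refine exists_congr fun M => ?_
        simp only [mem_compl, mem_singleton]
        refine and_congr_right fun hM0 => ?_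
        rw [hk, ← forall_card_eq_succ_image_nontrivial_iff]
        refine forall_congr' fun S => imp_congr_right fun _ =>
          ZModModule.span_eq_top_iff_nontrivial hV ?_
        rintro ⟨i, -, hi⟩
        exact hM0 i hi
    _ ↔ m ≤ k * 3 := by rw [exists_mapsTo_card_fiber_le_iff, hT, Fintype.card_fin]
    _ ↔ _ := by omega

/-- There is an `m × 2` matrix over `F₂` with no zero rows such that every
`(m-n)`-element subset of rows spans `F₂²` (has rank 2) iff `2m ≥ 3(n+1)`. -/
theorem exists_rank_two_matrix_iff (m n : ℕ) (hn : 0 < n) (hm : n < m) :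
    (∃ M : Fin m → Fin 2 → ZMod 2, (∀ i, M i ≠ 0) ∧
        ∀ S : Finset (Fin m), S.card = m - n →
          Submodule.span (ZMod 2) (M '' (S : Set (Fin m))) = ⊤) ↔
      3 * (n + 1) ≤ 2 * m :=
  exists_rank_two_matrix_iff_general m n hm
end

section
/- Let m = 7l and k a positive integer. There exists an assignment of multiplicities s₁,...,s₇ ≥ 0 to the 7 nonzero vectors of F₂³ with s₁+...+s₇ = m such that for every linearly dependent triple {i₁,i₂,i₃} of distinct nonzero vectors, s_{i₁}+s_{i₂}+s_{i₃} ≤ k-1, if and only if 3m ≤ 7(k-1). -/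
/-!
In a group of exponent 2 the lines of the projective space are the triples `{u, v, u + v}`, and
`v ↦ u + v` permutes the nonzero points other than `u`. Summing the line-sum bound over all
ordered pairs of distinct nonzero points therefore counts every point `3 (N - 1)` times, which gives
`3 m ≤ N (k - 1)` for `N` nonzero points; for `𝔽₂³`, `N = 7`. Conversely, the constant
multiplicity `l` has line sums `3 l`.
-/

open Finset

namespace ElementaryAbelianTwo

variable {G : Type*} [AddCommGroup G] (h2 : ∀ x : G, x + x = 0)
include h2

lemma add_add_cancel_left (u v : G) : u + (u + v) = v := by
  rw [← add_assoc, h2, zero_add]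

lemma add_eq_zero_iff_eq {u v : G} : u + v = 0 ↔ u = v := by
  rw [add_eq_zero_iff_eq_neg, neg_eq_of_add_eq_zero_right (h2 v)]

variable [Fintype G] [DecidableEq G]

lemma sum_erase_comp_add_left (f : G → ℕ) (u : G) :
    ∑ v ∈ (univ.erase 0).erase u, f (u + v) = ∑ v ∈ (univ.erase 0).erase u, f v := by
  have maps_to : ∀ v ∈ (univ.erase 0).erase u, u + v ∈ (univ.erase 0).erase u := by
    intro v hv
    simp only [mem_erase, mem_univ, and_true, ne_eq, add_eq_left] at hv ⊢
    exact ⟨hv.2, fun h ↦ hv.1 ((add_eq_zero_iff_eq h2).1 h).symm⟩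
  exact sum_nbij' (u + ·) (u + ·) maps_to maps_to (fun v _ ↦ add_add_cancel_left h2 u v)
    (fun v _ ↦ add_add_cancel_left h2 u v) (fun _ _ ↦ rfl)

lemma sum_sum_line_sums (f : G → ℕ) :
    ∑ u ∈ univ.erase 0, ∑ v ∈ (univ.erase 0).erase u, (f u + f v + f (u + v)) =
      3 * ((#(univ.erase (0 : G)) - 1) * ∑ x ∈ univ.erase 0, f x) := by
  set Z := (univ : Finset G).erase 0
  have per_point : ∀ u ∈ Z, ∑ v ∈ Z.erase u, (f u + f v + f (u + v)) =
      (#Z - 1) * f u + 2 * ∑ v ∈ Z.erase u, f v := by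
    intro u hu
    rw [sum_add_distrib, sum_add_distrib, sum_erase_comp_add_left h2 f u,
      sum_const, card_erase_of_mem hu, smul_eq_mul]
    ring
  have complement : ∑ u ∈ Z, ∑ v ∈ Z.erase u, f v = (#Z - 1) * ∑ x ∈ Z, f x := by
    have : ∑ u ∈ Z, (∑ v ∈ Z.erase u, f v + f u) = #Z * ∑ x ∈ Z, f x := by
      rw [sum_congr rfl fun u hu ↦ sum_erase_add Z f hu, sum_const, smul_eq_mul]
    rw [sum_add_distrib] at this
    rw [Nat.sub_mul, one_mul]
    omega
  rw [sum_congr rfl per_point, sum_add_distrib, ← mul_sum, ← mul_sum, complement]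
  ring

theorem three_mul_sum_le_of_line_sums_le {s : {x : G // x ≠ 0} → ℕ} {c : ℕ}
    (hcard : 2 ≤ Fintype.card {x : G // x ≠ 0})
    (hs : ∀ u v w : {x : G // x ≠ 0}, u ≠ v → v ≠ w → u ≠ w → (u : G) + v + w = 0 →
      s u + s v + s w ≤ c) :
    3 * ∑ v, s v ≤ Fintype.card {x : G // x ≠ 0} * c := by
  set Z := (univ : Finset G).erase 0
  let f : G → ℕ := fun x ↦ if h : x = 0 then 0 else s ⟨x, h⟩
  have hcardZ : Fintype.card {x : G // x ≠ 0} = #Z := by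
    rw [Fintype.card_subtype, filter_ne']
  have hsum : ∑ v, s v = ∑ x ∈ Z, f x := by
    rw [sum_subtype (p := (· ≠ 0)) Z (fun x ↦ by simp [Z])]
    exact sum_congr rfl fun v _ ↦ by simp [f, v.2]
  have line_le : ∀ u ∈ Z, ∀ v ∈ Z.erase u, f u + f v + f (u + v) ≤ c := by
    intro u hu v hv
    simp only [Z, mem_erase, mem_univ, and_true] at hu hv
    obtain ⟨hvu, hv0⟩ := hv
    have huv0 : u + v ≠ 0 := fun h ↦ hvu ((add_eq_zero_iff_eq h2).1 h).symm
    simp only [f, dif_neg hu, dif_neg hv0, dif_neg huv0]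
    refine hs _ _ ⟨u + v, huv0⟩ (Subtype.coe_ne_coe.1 hvu.symm) ?_ ?_ (h2 (u + v))
    · exact Subtype.coe_ne_coe.1 fun h ↦ hu (add_eq_right.1 h.symm)
    · exact Subtype.coe_ne_coe.1 fun h ↦ hv0 (add_eq_left.1 h.symm)
  have double_count : 3 * ((#Z - 1) * ∑ x ∈ Z, f x) ≤ #Z * ((#Z - 1) * c) := by
    rw [← sum_sum_line_sums h2 f]
    calc ∑ u ∈ Z, ∑ v ∈ Z.erase u, (f u + f v + f (u + v))
        ≤ ∑ u ∈ Z, ∑ v ∈ Z.erase u, c := sum_le_sum fun u hu ↦ sum_le_sum (line_le u hu)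
      _ = #Z * ((#Z - 1) * c) := by
        rw [sum_congr rfl fun u hu ↦ by rw [sum_const, card_erase_of_mem hu, smul_eq_mul]]
        rw [sum_const, smul_eq_mul]
  rw [hcardZ, hsum]
  rw [hcardZ] at hcard
  refine Nat.le_of_mul_le_mul_left ?_ (show 0 < #Z - 1 by omega)
  linarith [double_count]

end ElementaryAbelianTwo

theorem multiplicities_exist_iff_seven_l_general (l k : ℕ) :
    (∃ s : {v : Fin 3 → ZMod 2 // v ≠ 0} → ℕ,
        (∑ v, s v) = 7 * l ∧
        ∀ u v w : {v : Fin 3 → ZMod 2 // v ≠ 0},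
          u ≠ v → v ≠ w → u ≠ w →
          (u : Fin 3 → ZMod 2) + (v : Fin 3 → ZMod 2) + (w : Fin 3 → ZMod 2) = 0 →
            s u + s v + s w ≤ k - 1) ↔
      3 * (7 * l) ≤ 7 * (k - 1) := by
  have card_eq : Fintype.card {v : Fin 3 → ZMod 2 // v ≠ 0} = 7 := by decide
  constructor
  · rintro ⟨s, hsum, hs⟩
    have h := ElementaryAbelianTwo.three_mul_sum_le_of_line_sums_le (by decide)
      (card_eq ▸ by norm_num) hs
    rwa [card_eq, hsum] at h
  · intro h
    exact ⟨fun _ ↦ l, by simp [card_eq, mul_comm],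
      fun _ _ _ _ _ _ _ ↦ show l + l + l ≤ k - 1 by omega⟩

/-- Multiplicities `s` on the 7 nonzero vectors of `F₂³` summing to `m = 7l` such that
every linearly dependent triple `{u, v, w}` (i.e. distinct nonzero with `u+v+w = 0`) has
total multiplicity at most `k-1` exist iff `3m ≤ 7(k-1)`. -/
theorem multiplicities_exist_iff_seven_l (l k : ℕ) (hk : 0 < k) :
    (∃ s : {v : Fin 3 → ZMod 2 // v ≠ 0} → ℕ,
        (∑ v, s v) = 7 * l ∧
        ∀ u v w : {v : Fin 3 → ZMod 2 // v ≠ 0},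
          u ≠ v → v ≠ w → u ≠ w →
          (u : Fin 3 → ZMod 2) + (v : Fin 3 → ZMod 2) + (w : Fin 3 → ZMod 2) = 0 →
            s u + s v + s w ≤ k - 1) ↔
      3 * (7 * l) ≤ 7 * (k - 1) :=
  multiplicities_exist_iff_seven_l_general l k
end

section
/- Suppose s₁,...,s₇ are nonnegative integers assigned to the 7 nonzero vectors of F₂³ with sum m = 7l + a for a ∈ {2,3,4}, and s_{i₁}+s_{i₂}+s_{i₃} ≤ k-1 for every linearly dependent triple. Then 3l + 2 ≤ k - 1. Conversely if 3l+2 ≤ k-1 such s_i exist. -/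
/-!
Let `m = ∑ sᵢ`. For a fixed point `v`, the three lines through `v` partition the other six
points, so summing the line bound over them gives `m + 2 s_v ≤ 3 (k - 1)`. Since `m > 7l`, some
`s_v ≥ l + 1`, whence `3 (k - 1) ≥ 9l + a + 2 ≥ 9l + 4`, i.e. `k - 1 ≥ 3l + 2`.
Conversely, put `l` on every point and add `1` on `a` points of the affine plane `x₂ = 1`:
it contains no line, so every line gets at most `3l + 2`.
-/

open Finset

section LineSums

variable {V : Type*} [AddCommGroup V]

theorem add_self_eq_zero_of_zmod_two [Module (ZMod 2) V] (x : V) : x + x = 0 := by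
  rw [← two_smul (ZMod 2) x, show (2 : ZMod 2) = 0 from rfl, zero_smul]

theorem eq_of_add_eq_zero_of_zmod_two [Module (ZMod 2) V] {x y : V} (h : x + y = 0) : x = y :=
  (eq_neg_of_add_eq_zero_left h).trans
    (neg_eq_of_add_eq_zero_left (add_self_eq_zero_of_zmod_two y))

def LineSumsLE (s : {v : V // v ≠ 0} → ℕ) (c : ℕ) : Prop :=
  ∀ u v w : {v : V // v ≠ 0}, u ≠ v → v ≠ w → u ≠ w → (u : V) + v + w = 0 → s u + s v + s w ≤ c

variable [DecidableEq V]

def zeroExtend (s : {v : V // v ≠ 0} → ℕ) (x : V) : ℕ :=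
  if h : x = 0 then 0 else s ⟨x, h⟩

theorem sum_zeroExtend [Fintype V] (s : {v : V // v ≠ 0} → ℕ) :
    ∑ x, zeroExtend s x = ∑ u, s u := by
  rw [← Fintype.sum_subtype_add_sum_subtype (· ≠ 0)]
  have h0 : ∑ x : {x : V // ¬ x ≠ 0}, zeroExtend s x = 0 :=
    sum_eq_zero fun x _ => dif_pos (not_not.1 x.2)
  rw [h0, add_zero]
  exact sum_congr rfl fun u _ => dif_neg u.2

variable [Module (ZMod 2) V] {s : {v : V // v ≠ 0} → ℕ} {c : ℕ}

theorem LineSumsLE.zeroExtend_add_le (hs : LineSumsLE s c) {v x : V} (hv : v ≠ 0) (hx : x ≠ 0)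
    (hxv : x ≠ v) : zeroExtend s v + zeroExtend s x + zeroExtend s (x + v) ≤ c := by
  have hxv' : x + v ≠ 0 := fun h => hxv (eq_of_add_eq_zero_of_zmod_two h)
  simp only [zeroExtend, dif_neg hv, dif_neg hx, dif_neg hxv']
  refine hs _ _ _ ?_ ?_ ?_ ?_
  · exact fun h => hxv (congrArg Subtype.val h).symm
  · exact fun h => hv (by simpa using congrArg Subtype.val h)
  · exact fun h => hx (by simpa using congrArg Subtype.val h)
  · show v + x + (x + v) = 0
    rw [add_comm x v, add_self_eq_zero_of_zmod_two]

/-- Sum the line bound over the lines `{v, x, x + v}` through `v`, each counted twice as `x`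
runs over `V ∖ {0, v}`; the terms `x = 0` and `x = v` each contribute `2 s v`. -/
theorem LineSumsLE.card_mul_add_two_mul_sum_le [Fintype V] (hs : LineSumsLE s c)
    (v : {v : V // v ≠ 0}) :
    Fintype.card V * s v + 2 * ∑ u, s u ≤ 4 * s v + (Fintype.card V - 2) * c := by
  set f := zeroExtend s
  have hf0 : f 0 = 0 := dif_pos rfl
  have hfv : f v = s v := dif_neg v.2
  have hshift : ∑ x, f (x + v) = ∑ x, f x := Equiv.sum_comp (Equiv.addRight (v : V)) f
  have htotal : ∑ x, (f v + f x + f (x + v)) = Fintype.card V * f v + 2 * ∑ u, s u := by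
    rw [sum_add_distrib, sum_add_distrib, hshift, sum_const, card_univ, smul_eq_mul,
      sum_zeroExtend]
    ring
  have hv0 : (v : V) ∉ ({0} : Finset V) := by simpa using v.2
  rw [← sum_compl_add_sum (insert (v : V) {0}), sum_insert hv0, sum_singleton] at htotal
  have hrest : ∑ x ∈ (insert (v : V) {0} : Finset V)ᶜ, (f v + f x + f (x + v)) ≤
      (Fintype.card V - 2) * c := by
    have hcard : #(insert (v : V) {0} : Finset V)ᶜ = Fintype.card V - 2 := by
      rw [card_compl, card_insert_of_notMem hv0, card_singleton]
    rw [← hcard, ← smul_eq_mul]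
    refine sum_le_card_nsmul _ _ c fun x hx => hs.zeroExtend_add_le v.2 ?_ ?_ <;> simp_all
  simp only [zero_add, add_zero, add_self_eq_zero_of_zmod_two, hf0, hfv] at htotal hrest
  omega

end LineSums

theorem LineSumsLE.three_mul_add_two_le {s : {v : Fin 3 → ZMod 2 // v ≠ 0} → ℕ} {l a c : ℕ}
    (hs : LineSumsLE s c) (hsum : ∑ u, s u = 7 * l + a) (ha : 2 ≤ a) : 3 * l + 2 ≤ c := by
  have hlt : ∑ _u : {v : Fin 3 → ZMod 2 // v ≠ 0}, l < ∑ u, s u := by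
    simp only [sum_const, card_univ, smul_eq_mul,
      show Fintype.card {v : Fin 3 → ZMod 2 // v ≠ 0} = 7 from rfl]
    omega
  obtain ⟨v, -, hv⟩ := exists_lt_of_sum_lt hlt
  have hcount := hs.card_mul_add_two_mul_sum_le v
  rw [show Fintype.card (Fin 3 → ZMod 2) = 8 from rfl] at hcount
  omega

theorem add_add_ne_zero_of_apply_eq_one {ι : Type*} {x y z : ι → ZMod 2} {i : ι}
    (hx : x i = 1) (hy : y i = 1) (hz : z i = 1) : x + y + z ≠ 0 := fun h =>
  absurd (by simpa [hx, hy, hz] using congrFun h i) (by decide : (1 + 1 + 1 : ZMod 2) ≠ 0)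

theorem exists_lineSumsLE {l a c : ℕ} (ha : a ≤ 4) (hc : 3 * l + 2 ≤ c) :
    ∃ s : {v : Fin 3 → ZMod 2 // v ≠ 0} → ℕ, ∑ u, s u = 7 * l + a ∧ LineSumsLE s c := by
  let H : Finset {v : Fin 3 → ZMod 2 // v ≠ 0} := univ.filter fun v => v.1 2 = 1
  obtain ⟨A, hAH, hA⟩ := exists_subset_card_eq (show a ≤ #H by rwa [show #H = 4 by decide])
  have hAcoord : ∀ v ∈ A, v.1 2 = 1 := fun v hv => (mem_filter.1 (hAH hv)).2
  refine ⟨fun v => l + if v ∈ A then 1 else 0, by simp [sum_add_distrib, hA], ?_⟩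
  intro u v w _ _ _ huvw
  have hfree : ¬(u ∈ A ∧ v ∈ A ∧ w ∈ A) := fun ⟨hu, hv, hw⟩ =>
    add_add_ne_zero_of_apply_eq_one (hAcoord u hu) (hAcoord v hv) (hAcoord w hw) huvw
  beta_reduce
  split_ifs with hu hv hw <;> first | omega | exact absurd ⟨hu, hv, hw⟩ hfree

theorem multiplicities_exist_iff_seven_l_add_general (l k a : ℕ)
    (ha : a = 2 ∨ a = 3 ∨ a = 4) :
    (∃ s : {v : Fin 3 → ZMod 2 // v ≠ 0} → ℕ,
        (∑ v, s v) = 7 * l + a ∧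
        ∀ u v w : {v : Fin 3 → ZMod 2 // v ≠ 0},
          u ≠ v → v ≠ w → u ≠ w →
          (u : Fin 3 → ZMod 2) + (v : Fin 3 → ZMod 2) + (w : Fin 3 → ZMod 2) = 0 →
            s u + s v + s w ≤ k - 1) ↔
      3 * l + 2 ≤ k - 1 := by
  constructor
  · rintro ⟨s, hsum, hlines⟩
    exact LineSumsLE.three_mul_add_two_le hlines hsum (by omega)
  · exact exists_lineSumsLE (by omega)

/-- Multiplicities `s` on the 7 nonzero vectors of `F₂³` summing to `m = 7l + a`,
`a ∈ {2,3,4}`, such that every linearly dependent triple (distinct nonzero vectors with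
`u+v+w = 0`) has total multiplicity at most `k-1` exist iff `3l + 2 ≤ k - 1`. -/
theorem multiplicities_exist_iff_seven_l_add (l k a : ℕ) (hk : 0 < k)
    (ha : a = 2 ∨ a = 3 ∨ a = 4) :
    (∃ s : {v : Fin 3 → ZMod 2 // v ≠ 0} → ℕ,
        (∑ v, s v) = 7 * l + a ∧
        ∀ u v w : {v : Fin 3 → ZMod 2 // v ≠ 0},
          u ≠ v → v ≠ w → u ≠ w →
          (u : Fin 3 → ZMod 2) + (v : Fin 3 → ZMod 2) + (w : Fin 3 → ZMod 2) = 0 →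
            s u + s v + s w ≤ k - 1) ↔
      3 * l + 2 ≤ k - 1 :=
  multiplicities_exist_iff_seven_l_add_general l k a ha
end

section
/- Let A = Q[v₁,...,v_{2k-1}] and I the ideal generated by the 2k-1 monomials M_i = v_i v_{i+1} ⋯ v_{i+k-2} (indices mod 2k-1), k ≥ 3. Then the kernel of the map A^{2k-1} → A sending the i-th basis element X_i to M_i is generated by the 2k-1 elements v_{i+k-1} X_i − v_i X_{i+1}, i = 1,...,2k-1 (indices mod 2k-1). -/
/-!
Grade `A^{2k-1}` by `ℕ^{ZMod (2k-1)}`, giving the basis vector `Xᵢ` the multidegree of `Mᵢ`. The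
map to `A` is homogeneous, so a syzygy splits into homogeneous components. In multidegree `b` the
component is `∑ cᵢ x^b/Mᵢ · Xᵢ` with scalars `cᵢ` supported on the `i` with `Mᵢ ∣ x^b`, and
it is a syzygy iff `∑ cᵢ = 0`; hence it suffices that the differences
`x^b/Mᵢ · Xᵢ - x^b/Mⱼ · Xⱼ` lie in the span of the generators. For adjacent `i, i + 1` this
difference is a monomial multiple of a generator, since `lcm(Mᵢ, Mᵢ₊₁) = vᵢ ⋯ v_{i+k-1}`. In
general, the cyclic distance between `i` and `j` is at most `k - 1` because there are only `2k - 1`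
indices, and the windows of `Mᵢ` and `Mⱼ` then cover every window in between, so every
intermediate `Mₗ` also divides `x^b` and the adjacent steps chain.
-/

open MvPolynomial Finset

lemma Submodule.sum_smul_mem_of_forall_sub_mem {A M ι : Type*} [Ring A] [AddCommGroup M]
    [Module A M] [Fintype ι] (N : Submodule A M) {v : ι → M} {c : ι → A} {S : Set ι}
    (hv : ∀ i ∈ S, ∀ j ∈ S, v i - v j ∈ N) (hc : ∀ i ∉ S, c i = 0) (hsum : ∑ i, c i = 0) :
    ∑ i, c i • v i ∈ N := by
  rcases S.eq_empty_or_nonempty with rfl | ⟨j, hj⟩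
  · simp [hc]
  · have hshift : ∑ i, c i • v i = ∑ i, c i • (v i - v j) := by
      simp only [smul_sub, sum_sub_distrib, ← sum_smul, hsum, zero_smul, sub_zero]
    rw [hshift]
    refine N.sum_mem fun i _ => ?_
    by_cases hi : i ∈ S
    · exact N.smul_mem _ (hv i hi j hj)
    · simp [hc i hi]

namespace CyclicWindow

variable {m : ℕ}

noncomputable def window (w : ℕ) (i : ZMod m) : ZMod m →₀ ℕ :=
  ∑ j ∈ range w, Finsupp.single (i + j) 1

lemma prod_X_eq_monomial_window (R : Type*) [CommSemiring R] (w : ℕ) (i : ZMod m) :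
    ∏ j ∈ range w, (X (i + j) : MvPolynomial (ZMod m) R) = monomial (window w i) 1 := by
  rw [window, monomial_sum_one]
  rfl

lemma window_succ (w : ℕ) (i : ZMod m) :
    window (w + 1) i = window w i + Finsupp.single (i + w) 1 :=
  sum_range_succ _ _

lemma window_succ' (w : ℕ) (i : ZMod m) :
    window (w + 1) i = Finsupp.single i 1 + window w (i + 1) := by
  rw [window, sum_range_succ', add_comm, window, Nat.cast_zero, add_zero]
  congr 1
  exact sum_congr rfl fun j _ => by push_cast; ring_nf

lemma toMultiset_window (w : ℕ) (i : ZMod m) :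
    Finsupp.toMultiset (window w i) = (Multiset.range w).map fun j : ℕ => i + j := by
  simp_rw [window, Finsupp.toMultiset_sum, Finsupp.toMultiset_single, one_nsmul,
    sum_eq_multiset_sum]
  rw [← Multiset.sum_map_singleton ((Multiset.range w).map fun j : ℕ => i + j), Multiset.map_map]
  rfl

lemma window_le_iff {w : ℕ} (hw : w ≤ m) {i : ZMod m} {b : ZMod m →₀ ℕ} :
    window w i ≤ b ↔ ∀ j < w, b (i + j) ≠ 0 := by
  classical
  have hnodup : ((Multiset.range w).map fun j : ℕ => i + j).Nodup := by
    refine (Multiset.nodup_range w).map_on fun x hx y hy hxy => ?_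
    rw [Multiset.mem_range] at hx hy
    simpa [ZMod.val_natCast_of_lt (hx.trans_le hw), ZMod.val_natCast_of_lt (hy.trans_le hw)]
      using congrArg ZMod.val (add_left_cancel hxy)
  rw [← Finsupp.orderIsoMultiset.le_iff_le, Finsupp.coe_orderIsoMultiset, toMultiset_window,
    Multiset.le_iff_subset hnodup]
  simp [Multiset.subset_iff]

variable {w : ℕ} {b : ZMod m →₀ ℕ} {i : ZMod m}

lemma window_succ_le (hw : 0 < w) (hwm : w < m) (h₀ : window w i ≤ b)
    (h₁ : window w (i + 1) ≤ b) : window (w + 1) i ≤ b := by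
  rw [window_le_iff hwm.le] at h₀ h₁
  rw [window_le_iff hwm]
  intro j hj
  obtain hj | hjw := Nat.lt_succ_iff_lt_or_eq.1 hj
  · exact h₀ j hj
  · rw [hjw]
    simpa [add_assoc, Nat.cast_sub hw] using h₁ (w - 1) (by omega)

lemma window_le_of_le_of_le {s t : ℕ} (hwm : w ≤ m) (hst : s ≤ t) (htw : t ≤ w)
    (h₀ : window w i ≤ b) (ht : window w (i + (t : ZMod m)) ≤ b) :
    window w (i + (s : ZMod m)) ≤ b := by
  rw [window_le_iff hwm] at h₀ ht ⊢
  intro j hj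
  by_cases hsj : s + j < w
  · simpa [add_assoc] using h₀ (s + j) hsj
  · have hcast : i + s + j = i + t + ((s + j - t : ℕ) : ZMod m) := by
      push_cast [Nat.cast_sub (by omega : t ≤ s + j)]; ring
    rw [hcast]
    exact ht _ (by omega)

lemma exists_le_and_eq_add_or_eq_add [NeZero m] (hmw : m ≤ 2 * w + 1) (i j : ZMod m) :
    ∃ t ≤ w, j = i + t ∨ i = j + t := by
  have hval : ((j - i).val : ZMod m) = j - i := ZMod.natCast_zmod_val _
  by_cases hle : (j - i).val ≤ w
  · exact ⟨_, hle, Or.inl (by rw [hval]; ring)⟩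
  · have hlt := ZMod.val_lt (j - i)
    refine ⟨m - (j - i).val, by omega, Or.inr ?_⟩
    rw [Nat.cast_sub hlt.le, ZMod.natCast_self, hval]
    ring

variable (R : Type*) [CommRing R]

noncomputable def syzygy (w : ℕ) (i : ZMod m) : ZMod m → MvPolynomial (ZMod m) R :=
  Pi.single i (X (i + (w : ZMod m))) - Pi.single (i + 1) (X i)

noncomputable def monomialAt (w : ℕ) (b : ZMod m →₀ ℕ) (i : ZMod m) :
    ZMod m → MvPolynomial (ZMod m) R :=
  Pi.single i (monomial (b - window w i) 1)

lemma monomialAt_sub_monomialAt_add_one (h : window (w + 1) i ≤ b) :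
    monomialAt R w b i - monomialAt R w b (i + 1) =
      monomial (b - window (w + 1) i) (1 : R) • syzygy R w i := by
  obtain ⟨c, rfl⟩ := exists_add_of_le h
  rw [syzygy, smul_sub, ← Pi.single_smul, ← Pi.single_smul, smul_eq_mul, smul_eq_mul, X, X,
    monomial_mul, monomial_mul, mul_one, add_tsub_cancel_left, monomialAt, monomialAt]
  congr 3
  · rw [window_succ, add_assoc, add_tsub_cancel_left, add_comm]
  · rw [window_succ', add_right_comm, add_tsub_cancel_right, add_comm]

variable {R}

lemma monomialAt_sub_monomialAt_add_one_mem (hw : 0 < w) (hwm : w < m)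
    (h₀ : window w i ≤ b) (h₁ : window w (i + 1) ≤ b) :
    monomialAt R w b i - monomialAt R w b (i + 1) ∈
      Submodule.span (MvPolynomial (ZMod m) R) (Set.range (syzygy R w)) := by
  rw [monomialAt_sub_monomialAt_add_one R (window_succ_le hw hwm h₀ h₁)]
  exact Submodule.smul_mem _ _ (Submodule.subset_span (Set.mem_range_self i))

lemma monomialAt_sub_monomialAt_add_mem {t : ℕ} (hw : 0 < w) (hwm : w < m) (htw : t ≤ w)
    (h₀ : window w i ≤ b) (ht : window w (i + (t : ZMod m)) ≤ b) :
    monomialAt R w b i - monomialAt R w b (i + (t : ZMod m)) ∈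
      Submodule.span (MvPolynomial (ZMod m) R) (Set.range (syzygy R w)) := by
  suffices ∀ s ≤ t, monomialAt R w b i - monomialAt R w b (i + (s : ZMod m)) ∈
      Submodule.span (MvPolynomial (ZMod m) R) (Set.range (syzygy R w)) from this t le_rfl
  intro s hs
  induction s with
  | zero => simp
  | succ s ih =>
    have hstep := monomialAt_sub_monomialAt_add_one_mem (R := R) hw hwm
      (window_le_of_le_of_le hwm.le (Nat.le_of_succ_le hs) htw h₀ ht)
      (by simpa [add_assoc] using window_le_of_le_of_le hwm.le hs htw h₀ ht)
    simpa [add_assoc] using Submodule.add_mem _ (ih (Nat.le_of_succ_le hs)) hstep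

lemma monomialAt_sub_monomialAt_mem [NeZero m] {j : ZMod m} (hw : 0 < w) (hwm : w < m)
    (hmw : m ≤ 2 * w + 1) (hi : window w i ≤ b) (hj : window w j ≤ b) :
    monomialAt R w b i - monomialAt R w b j ∈
      Submodule.span (MvPolynomial (ZMod m) R) (Set.range (syzygy R w)) := by
  obtain ⟨t, htw, rfl | rfl⟩ := exists_le_and_eq_add_or_eq_add hmw i j
  · exact monomialAt_sub_monomialAt_add_mem hw hwm htw hi hj
  · rw [← neg_sub]
    exact Submodule.neg_mem _ (monomialAt_sub_monomialAt_add_mem hw hwm htw hj hi)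

variable (w) in
noncomputable def degreeCoeff (f : ZMod m → MvPolynomial (ZMod m) R) (b : ZMod m →₀ ℕ)
    (i : ZMod m) : R :=
  if window w i ≤ b then coeff (b - window w i) (f i) else 0

variable (w) in
/-- The `i`-th basis vector has multidegree `window w i`. -/
noncomputable def multidegreeComponent (f : ZMod m → MvPolynomial (ZMod m) R)
    (b : ZMod m →₀ ℕ) (i : ZMod m) : MvPolynomial (ZMod m) R :=
  monomial (b - window w i) (degreeCoeff w f b i)

lemma coeff_multidegreeComponent (f : ZMod m → MvPolynomial (ZMod m) R) (a : ZMod m →₀ ℕ) :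
    coeff a (multidegreeComponent w f b i) = if b = a + window w i then coeff a (f i) else 0 := by
  rw [multidegreeComponent, degreeCoeff, coeff_monomial]
  by_cases h : window w i ≤ b
  · simp only [if_pos h, tsub_eq_iff_eq_add_of_le h]
    split_ifs with hb
    · rw [hb, add_tsub_cancel_right]
    · rfl
  · have hb : b ≠ a + window w i := fun hb => h (hb ▸ le_add_self)
    simp [h, hb]

lemma exists_eq_sum_multidegreeComponent [NeZero m] (f : ZMod m → MvPolynomial (ZMod m) R) :
    ∃ B : Finset (ZMod m →₀ ℕ), f = ∑ b ∈ B, multidegreeComponent w f b := by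
  classical
  refine ⟨univ.biUnion fun i => (f i).support.image (· + window w i), ?_⟩
  ext i a
  simp only [Finset.sum_apply, coeff_sum, coeff_multidegreeComponent, sum_ite_eq']
  split_ifs with h
  · rfl
  · by_contra ha
    exact h (mem_biUnion.2 ⟨i, mem_univ _, mem_image_of_mem _ (mem_support_iff.2 ha)⟩)

lemma sum_degreeCoeff [NeZero m] (f : ZMod m → MvPolynomial (ZMod m) R) (b : ZMod m →₀ ℕ) :
    ∑ i, degreeCoeff w f b i = coeff b (∑ i, f i * monomial (window w i) 1) := by
  simp only [coeff_sum, coeff_mul_monomial', mul_one]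
  rfl

lemma multidegreeComponent_mem [NeZero m] (hw : 0 < w) (hwm : w < m) (hmw : m ≤ 2 * w + 1)
    {f : ZMod m → MvPolynomial (ZMod m) R} (hf : ∑ i, f i * monomial (window w i) 1 = 0)
    (b : ZMod m →₀ ℕ) :
    multidegreeComponent w f b ∈
      Submodule.span (MvPolynomial (ZMod m) R) (Set.range (syzygy R w)) := by
  have hsingle : multidegreeComponent w f b =
      ∑ i, (C (degreeCoeff w f b i) : MvPolynomial (ZMod m) R) • monomialAt R w b i := by
    rw [← Finset.univ_sum_single (multidegreeComponent w f b)]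
    refine sum_congr rfl fun i _ => ?_
    rw [monomialAt, ← Pi.single_smul, smul_eq_mul, C_mul_monomial, mul_one]
    rfl
  rw [hsingle]
  refine Submodule.sum_smul_mem_of_forall_sub_mem _ (S := {i | window w i ≤ b})
    (fun i hi j hj => monomialAt_sub_monomialAt_mem hw hwm hmw hi hj)
    (fun i hi => by simp [degreeCoeff, if_neg (show ¬ window w i ≤ b from hi)]) ?_
  rw [← map_sum, sum_degreeCoeff, hf, coeff_zero, map_zero]

lemma sum_syzygy_mul_monomial_window [NeZero m] (i : ZMod m) :
    ∑ j, syzygy R w i j * monomial (window w j) 1 = 0 := by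
  simp only [syzygy, Pi.sub_apply, sub_mul, sum_sub_distrib, Pi.single_apply, ite_mul, zero_mul,
    sum_ite_eq', mem_univ, if_true, X, monomial_mul, mul_one]
  rw [add_comm, ← window_succ, ← window_succ', sub_self]

theorem sum_mul_monomial_window_eq_zero_iff [NeZero m] (hw : 0 < w) (hwm : w < m)
    (hmw : m ≤ 2 * w + 1) (f : ZMod m → MvPolynomial (ZMod m) R) :
    ∑ i, f i * monomial (window w i) 1 = 0 ↔
      f ∈ Submodule.span (MvPolynomial (ZMod m) R) (Set.range (syzygy R w)) := by
  let Φ := Fintype.linearCombination (MvPolynomial (ZMod m) R)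
    (fun i : ZMod m => (monomial (window w i) 1 : MvPolynomial (ZMod m) R))
  have hΦ (g : ZMod m → MvPolynomial (ZMod m) R) : Φ g = ∑ i, g i * monomial (window w i) 1 :=
    Fintype.linearCombination_apply _ _ _
  constructor
  · intro hf
    obtain ⟨B, hB⟩ := exists_eq_sum_multidegreeComponent (w := w) f
    rw [hB]
    exact Submodule.sum_mem _ fun b _ => multidegreeComponent_mem hw hwm hmw hf b
  · intro hf
    have hspan : Submodule.span (MvPolynomial (ZMod m) R) (Set.range (syzygy R w)) ≤
        LinearMap.ker Φ := by
      rw [Submodule.span_le]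
      rintro _ ⟨i, rfl⟩
      exact (hΦ _).trans (sum_syzygy_mul_monomial_window i)
    exact (hΦ f).symm.trans (hspan hf)

end CyclicWindow

/-- First syzygies of the Stanley–Reisner ideal of `P_k`: over `A = ℚ[v₁,...,v_{2k-1}]`
(variables indexed cyclically by `ZMod (2k-1)`), a relation `∑ fᵢ Mᵢ = 0` among the
monomials `Mᵢ = vᵢ v_{i+1} ⋯ v_{i+k-2}` holds iff `f` lies in the `A`-submodule of
`A^{2k-1}` generated by the elements `v_{i+k-1} Xᵢ − vᵢ X_{i+1}`. -/
theorem syzygies_of_cyclic_monomial_ideal (k m : ℕ) [NeZero m] (hk : 3 ≤ k)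
    (hm : m = 2 * k - 1)
    (f : ZMod m → MvPolynomial (ZMod m) ℚ) :
    (∑ i : ZMod m, f i * ∏ j ∈ Finset.range (k - 1), X (i + (j : ZMod m)) = 0) ↔
      f ∈ Submodule.span (MvPolynomial (ZMod m) ℚ)
        (Set.range fun i : ZMod m =>
          (Pi.single i (X (i + ((k - 1 : ℕ) : ZMod m)))
            - Pi.single (i + 1) (X i) : ZMod m → MvPolynomial (ZMod m) ℚ)) := by
  simp only [CyclicWindow.prod_X_eq_monomial_window]
  exact CyclicWindow.sum_mul_monomial_window_eq_zero_iff (by omega) (by omega) (by omega) f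
end

section
/- Let k ≥ 3 and consider polynomials g₁,...,g_{2k-1} ∈ Q[x₁,...,x_{2k-1}] (the x_i distinct variables) satisfying the cyclic system g_i x_{i+k-1} = g_{i-1} x_{i-1} for all i mod (2k-1). Then there exists a ∈ Q[x₁,...,x_{2k-1}] with g_i = a · x_{i+k} x_{i+k+1} ⋯ x_{i+2k-2} (the product of the k-1 variables x_j for j in the arc {i+k,...,i+2k-2} mod 2k-1), for every i. -/
/-! Let `Q i` be the claimed monomial. Since `Q` satisfies the same relation as `g`,
cross-multiplying gives `g i * Q (i - 1) = g (i - 1) * Q i`, and going around the cycle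
`g i * Q j = g j * Q i` for all `i, j`: the ratio `g i / Q i` does not depend on `i`.
Two of the `Q i` are products of disjoint sets of variables, hence coprime, so `Q 0 ∣ g 0`, and
the quotient is the polynomial `a`. -/

open MvPolynomial Finset

theorem isRelPrime_prod_X_prod_X {σ R ι κ : Type*} [CommRing R] [IsDomain R]
    [UniqueFactorizationMonoid R] {s : Finset ι} {t : Finset κ} {f : ι → σ} {g : κ → σ}
    (hfg : ∀ a ∈ s, ∀ b ∈ t, f a ≠ g b) :
    IsRelPrime (∏ a ∈ s, X (f a) : MvPolynomial σ R) (∏ b ∈ t, X (g b)) :=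
  IsRelPrime.prod_left fun a ha => IsRelPrime.prod_right fun b hb =>
    X_prime.irreducible.isRelPrime_iff_not_dvd.mpr (X_dvd_X.not.mpr (hfg a ha b hb))

theorem prod_range_shift_mul {G M : Type*} [AddCommMonoidWithOne G] [CommMonoid M]
    (x : G → M) (b : G) (n : ℕ) :
    (∏ j ∈ range n, x (b + 1 + j)) * x b = x (b + n) * ∏ j ∈ range n, x (b + j) := by
  calc (∏ j ∈ range n, x (b + 1 + j)) * x b = ∏ j ∈ range (n + 1), x (b + j) := by
        simp only [prod_range_succ', Nat.cast_add_one, Nat.cast_zero, add_zero, ← add_assoc,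
          add_right_comm b 1]
    _ = x (b + n) * ∏ j ∈ range n, x (b + j) := by rw [prod_range_succ, mul_comm]

/-- Both sides are the product over the arc `{i + n, …, i + 2n}`, because `i + 2n = i - 1`. -/
theorem prod_arc_mul_of_two_mul_add_one_eq_zero {G M : Type*} [CommRing G] [CommMonoid M]
    (x : G → M) {n : ℕ} (hn : (n : G) + n + 1 = 0) (i : G) :
    (∏ j ∈ range n, x (i + (n + 1) + j)) * x (i + n) =
      (∏ j ∈ range n, x (i - 1 + (n + 1) + j)) * x (i - 1) := by
  have h := prod_range_shift_mul x (i + n) n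
  rw [show i + n + n = i - 1 by linear_combination hn, show i + n + 1 = i + (n + 1) by ring] at h
  rw [h, mul_comm]
  congr 1
  exact prod_congr rfl fun j _ => congrArg x (by ring)

theorem ZMod.mul_eq_mul_of_cyclic {M : Type*} [CommMonoidWithZero M] [IsCancelMulZero M]
    {m : ℕ} [NeZero m]
    {g P : ZMod m → M} (hP : ∀ i, P i ≠ 0) (h : ∀ i, g i * P (i - 1) = g (i - 1) * P i)
    (i j : ZMod m) : g i * P j = g j * P i := by
  obtain ⟨n, rfl⟩ : ∃ n : ℕ, i = j - n := ⟨(j - i).val, by simp⟩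
  induction n with
  | zero => simp
  | succ n ih =>
    apply mul_right_cancel₀ (hP (j - n))
    have step := h (j - n)
    rw [sub_sub, ← Nat.cast_add_one] at step
    calc g (j - (n + 1 : ℕ)) * P j * P (j - n) = g (j - (n + 1 : ℕ)) * P (j - n) * P j := by
          rw [mul_right_comm]
      _ = g (j - n) * P (j - (n + 1 : ℕ)) * P j := by rw [step]
      _ = g j * P (j - (n + 1 : ℕ)) * P (j - n) := by rw [mul_right_comm, ih, mul_right_comm]

theorem cyclic_syzygy_rank_one_general (k m : ℕ) [NeZero m] (hm : m = 2 * k - 1)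
    (g : ZMod m → MvPolynomial (ZMod m) ℚ)
    (hg : ∀ i : ZMod m,
      g i * X (i + ((k - 1 : ℕ) : ZMod m)) = g (i - 1) * X (i - 1)) :
    ∃ a : MvPolynomial (ZMod m) ℚ, ∀ i : ZMod m,
      g i = a * ∏ j ∈ Finset.range (k - 1), X (i + ((k : ℕ) : ZMod m) + (j : ZMod m)) := by
  obtain ⟨n, rfl⟩ : ∃ n, k = n + 1 := ⟨k - 1, by have := NeZero.ne m; omega⟩
  have hn : (n : ZMod m) + n + 1 = 0 := by
    have h : ((2 * n + 1 : ℕ) : ZMod m) = 0 := by rw [show 2 * n + 1 = m by omega]; simp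
    push_cast at h
    linear_combination h
  simp only [Nat.add_sub_cancel, Nat.cast_add_one] at hg ⊢
  set Q : ZMod m → MvPolynomial (ZMod m) ℚ := fun i => ∏ j ∈ range n, X (i + (n + 1) + j)
  have hQ : ∀ i, Q i ≠ 0 := fun i => prod_ne_zero_iff.mpr fun j _ => X_ne_zero _
  have hcross : ∀ i j, g i * Q j = g j * Q i := by
    have hQX : ∀ i, Q i * X (i + n) = Q (i - 1) * X (i - 1) :=
      prod_arc_mul_of_two_mul_add_one_eq_zero (fun a => (X a : MvPolynomial (ZMod m) ℚ)) hn
    refine ZMod.mul_eq_mul_of_cyclic hQ fun i => mul_right_cancel₀ (X_ne_zero (i - 1)) ?_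
    linear_combination Q i * hg i - g i * hQX i
  -- `Q 0` and `Q (-n)` run over the disjoint arcs `{n + 1, …, 2n}` and `{1, …, n}`.
  have hcoprime : IsRelPrime (Q 0) (Q (-n)) := by
    refine isRelPrime_prod_X_prod_X fun a ha b hb hab => ?_
    have hcast : ((n + 1 + a : ℕ) : ZMod m) = ((1 + b : ℕ) : ZMod m) := by
      push_cast
      linear_combination hab
    rw [mem_range] at ha hb
    rw [ZMod.natCast_eq_natCast_iff', Nat.mod_eq_of_lt (by omega), Nat.mod_eq_of_lt (by omega)]
      at hcast
    omega
  obtain ⟨a, ha⟩ : Q 0 ∣ g 0 := hcoprime.dvd_of_dvd_mul_right ⟨g (-n), by rw [hcross, mul_comm]⟩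
  refine ⟨a, fun i => mul_right_cancel₀ (hQ 0) ?_⟩
  rw [hcross, ha]
  ring

/-- Second syzygy: if polynomials `g_i ∈ ℚ[x₁,...,x_{2k-1}]` (indices cyclic mod `2k-1`)
satisfy `gᵢ x_{i+k-1} = g_{i-1} x_{i-1}` for all `i`, then there is a single polynomial
`a` with `gᵢ = a ⋅ x_{i+k} x_{i+k+1} ⋯ x_{i+2k-2}` for every `i`. -/
theorem cyclic_syzygy_rank_one (k m : ℕ) [NeZero m] (hk : 3 ≤ k) (hm : m = 2 * k - 1)
    (g : ZMod m → MvPolynomial (ZMod m) ℚ)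
    (hg : ∀ i : ZMod m,
      g i * X (i + ((k - 1 : ℕ) : ZMod m)) = g (i - 1) * X (i - 1)) :
    ∃ a : MvPolynomial (ZMod m) ℚ, ∀ i : ZMod m,
      g i = a * ∏ j ∈ Finset.range (k - 1), X (i + ((k : ℕ) : ZMod m) + (j : ZMod m)) :=
  cyclic_syzygy_rank_one_general k m hm g hg
end

section
/- With φᵢ = aᵢ+...+a_{i+k-2}, ψᵢ = aᵢ+...+a_{i+k-1} (indices mod 2k-1), aᵢ ≥ 1, Σaᵢ = n+3, the polynomial t^{n+3} − Σᵢ t^{ψᵢ} + Σᵢ t^{φᵢ} − 1 is divisible by (t−1)³ in Z[t]. -/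
/-!
Modulo `(x - 1) ^ 3` one has `x ^ e ≡ 1 + e (x - 1) + C(e, 2) (x - 1) ^ 2`, so two sums of
powers of `x` agree modulo `(x - 1) ^ 3` as soon as their exponents have the same number, the
same sum and the same sum of squares. For the cyclic window sums, `ψᵢ + φ_{i+k} = n + 3` because
the two windows together cover the whole cycle of length `2k - 1`; hence `∑ ψᵢ = k (n + 3)`,
`∑ φᵢ = (k - 1) (n + 3)` and `∑ ψᵢ² = (n + 3)² + ∑ φᵢ²`, which are exactly these conditions
for the exponents `n + 3, φ₁, …` against `0, ψ₁, …`.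
-/

open Polynomial Finset

theorem Nat.two_mul_choose_two_add_self (e : ℕ) : 2 * e.choose 2 + e = e ^ 2 := by
  rw [Nat.choose_two_right, Nat.mul_div_cancel' (Nat.even_mul_pred_self e).two_dvd]
  cases e <;> simp [sq]; ring

section TruncatedBinomial

variable {R : Type*} [CommRing R]

theorem sub_one_pow_three_dvd_pow_sub (x : R) (e : ℕ) :
    (x - 1) ^ 3 ∣ x ^ e - (1 + e * (x - 1) + e.choose 2 * (x - 1) ^ 2) := by
  induction e with
  | zero => simp
  | succ e ih =>
    obtain ⟨q, hq⟩ := ih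
    refine ⟨x * q + e.choose 2, ?_⟩
    push_cast [Nat.choose_succ_succ, Nat.choose_one_right]
    linear_combination x * hq

theorem sub_one_pow_three_dvd_sum_pow_sub {ι : Type*} (s : Finset ι) (x : R) (f : ι → ℕ) :
    (x - 1) ^ 3 ∣ ∑ i ∈ s, x ^ f i -
      (#s + ↑(∑ i ∈ s, f i) * (x - 1) + ↑(∑ i ∈ s, (f i).choose 2) * (x - 1) ^ 2) := by
  have hsum : ∑ i ∈ s, x ^ f i -
      (#s + ↑(∑ i ∈ s, f i) * (x - 1) + ↑(∑ i ∈ s, (f i).choose 2) * (x - 1) ^ 2) =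
      ∑ i ∈ s, (x ^ f i - (1 + f i * (x - 1) + (f i).choose 2 * (x - 1) ^ 2)) := by
    push_cast
    simp only [sum_sub_distrib, sum_add_distrib, sum_mul, sum_const, nsmul_one]
  rw [hsum]
  exact dvd_sum fun i _ => sub_one_pow_three_dvd_pow_sub x (f i)

theorem sub_one_pow_three_dvd_sum_pow_sub_sum_pow {ι : Type*} (s : Finset ι) (x : R)
    (f g : ι → ℕ) (h₁ : ∑ i ∈ s, f i = ∑ i ∈ s, g i)
    (h₂ : ∑ i ∈ s, f i ^ 2 = ∑ i ∈ s, g i ^ 2) :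
    (x - 1) ^ 3 ∣ ∑ i ∈ s, x ^ f i - ∑ i ∈ s, x ^ g i := by
  have hchoose : ∑ i ∈ s, (f i).choose 2 = ∑ i ∈ s, (g i).choose 2 := by
    have h := h₂
    simp only [← Nat.two_mul_choose_two_add_self, sum_add_distrib, ← mul_sum, h₁] at h
    omega
  have h := dvd_sub (sub_one_pow_three_dvd_sum_pow_sub s x f)
    (sub_one_pow_three_dvd_sum_pow_sub s x g)
  rwa [h₁, hchoose, sub_sub_sub_cancel_right] at h

end TruncatedBinomial

namespace ZMod

variable {m : ℕ} {M : Type*} [AddCommMonoid M]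

theorem sum_range_natCast [NeZero m] (f : ZMod m → M) : ∑ j ∈ range m, f j = ∑ x, f x :=
  sum_nbij' (fun j => (j : ZMod m)) val (fun _ _ => mem_univ _)
    (fun x _ => mem_range.2 x.val_lt) (fun _ hj => val_cast_of_lt (mem_range.1 hj))
    (fun x _ => natCast_zmod_val x) (fun _ _ => rfl)

def windowSum (a : ZMod m → M) (i : ZMod m) (l : ℕ) : M :=
  ∑ j ∈ range l, a (i + j)

theorem windowSum_add_windowSum (a : ZMod m → M) (i : ZMod m) (l l' : ℕ) :
    windowSum a i l + windowSum a (i + l) l' = windowSum a i (l + l') := by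
  simp only [windowSum, sum_range_add, Nat.cast_add, add_assoc]

theorem windowSum_self [NeZero m] (a : ZMod m → M) (i : ZMod m) :
    windowSum a i m = ∑ x, a x := by
  rw [windowSum, sum_range_natCast (fun j => a (i + j))]
  exact Equiv.sum_comp (Equiv.addLeft i) a

theorem windowSum_add_windowSum_complement [NeZero m] (a : ZMod m → M) (i : ZMod m) {l : ℕ}
    (hl : l ≤ m) : windowSum a i l + windowSum a (i + l) (m - l) = ∑ x, a x := by
  rw [windowSum_add_windowSum, Nat.add_sub_cancel' hl, windowSum_self]

theorem sum_windowSum [NeZero m] (a : ZMod m → M) (l : ℕ) :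
    ∑ i, windowSum a i l = l • ∑ x, a x := by
  simp only [windowSum]
  rw [sum_comm]
  have hshift (j : ℕ) : ∑ i, a (i + j) = ∑ x, a x :=
    Equiv.sum_comp (Equiv.addRight (j : ZMod m)) a
  simp only [hshift, sum_const, card_range]

theorem sum_windowSum_sq_add [NeZero m] (a : ZMod m → ℕ) {l : ℕ} (hl : l ≤ m) :
    ∑ i, windowSum a i l ^ 2 + 2 * (m - l) * (∑ x, a x) ^ 2 =
      m * (∑ x, a x) ^ 2 + ∑ i, windowSum a i (m - l) ^ 2 := by
  obtain ⟨S, hS⟩ : ∃ S, ∑ x, a x = S := ⟨_, rfl⟩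
  have hshift (F : ZMod m → ℕ) : ∑ i, F (i + l) = ∑ i, F i :=
    Equiv.sum_comp (Equiv.addRight (l : ZMod m)) F
  -- `x ^ 2 + 2 (x + y) y = (x + y) ^ 2 + y ^ 2`, with `x + y = S` for complementary windows
  have hpoint (i : ZMod m) : windowSum a i l ^ 2 + 2 * S * windowSum a (i + l) (m - l) =
      S ^ 2 + windowSum a (i + l) (m - l) ^ 2 := by
    rw [← hS, ← windowSum_add_windowSum_complement a i hl]
    ring
  have hsum := sum_congr rfl fun i (_ : i ∈ univ) => hpoint i
  rw [sum_add_distrib, sum_add_distrib, ← mul_sum, hshift (windowSum a · (m - l)),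
    hshift (windowSum a · (m - l) ^ 2), sum_windowSum, hS, sum_const, card_univ, ZMod.card,
    smul_eq_mul, smul_eq_mul] at hsum
  rw [hS]
  linarith

end ZMod

theorem h_polynomial_divisibility_general (k m : ℕ) [NeZero m] (hm : m = 2 * k - 1)
    (a : ZMod m → ℕ) (n : ℕ) (hn : n + 3 = ∑ i, a i) :
    ((Polynomial.X - 1) ^ 3 : Polynomial ℤ) ∣
      (Polynomial.X ^ (n + 3)
        - ∑ i : ZMod m, Polynomial.X ^ (∑ j ∈ Finset.range k, a (i + (j : ZMod m)))
        + ∑ i : ZMod m, Polynomial.X ^ (∑ j ∈ Finset.range (k - 1), a (i + (j : ZMod m)))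
        - 1) := by
  obtain ⟨k, rfl⟩ : ∃ k', k = k' + 1 := Nat.exists_eq_add_one.2 (by have := NeZero.ne m; omega)
  have hsq := ZMod.sum_windowSum_sq_add a (l := k + 1) (by omega)
  rw [show m - (k + 1) = k by omega, ← hn] at hsq
  have hm' := congrArg (· * (n + 3) ^ 2) (show m = 2 * k + 1 by omega)
  have hψ := ZMod.sum_windowSum a (k + 1)
  have hφ := ZMod.sum_windowSum a k
  rw [← hn, smul_eq_mul] at hψ hφ
  have key := sub_one_pow_three_dvd_sum_pow_sub_sum_pow univ (X : ℤ[X])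
    (fun o : Option (ZMod m) => o.elim (n + 3) (ZMod.windowSum a · k))
    (fun o => o.elim 0 (ZMod.windowSum a · (k + 1)))
    (by simp only [Fintype.sum_option, Option.elim]; linarith)
    (by simp only [Fintype.sum_option, Option.elim]; linarith)
  convert key using 1
  simp only [Fintype.sum_option, Option.elim, pow_zero, Nat.add_sub_cancel, ZMod.windowSum]
  ring

/-- With `φᵢ = aᵢ + ⋯ + a_{i+k-2}`, `ψᵢ = aᵢ + ⋯ + a_{i+k-1}` (indices mod `2k-1`),
`aᵢ ≥ 1` and `∑ aᵢ = n+3`, the polynomial `t^{n+3} − ∑ᵢ t^{ψᵢ} + ∑ᵢ t^{φᵢ} − 1` is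
divisible by `(t−1)³` in `ℤ[t]`. -/
theorem h_polynomial_divisibility (k m : ℕ) [NeZero m] (hk : 2 ≤ k) (hm : m = 2 * k - 1)
    (a : ZMod m → ℕ) (ha : ∀ i, 1 ≤ a i) (n : ℕ) (hn : n + 3 = ∑ i, a i) :
    ((Polynomial.X - 1) ^ 3 : Polynomial ℤ) ∣
      (Polynomial.X ^ (n + 3)
        - ∑ i : ZMod m, Polynomial.X ^ (∑ j ∈ Finset.range k, a (i + (j : ZMod m)))
        + ∑ i : ZMod m, Polynomial.X ^ (∑ j ∈ Finset.range (k - 1), a (i + (j : ZMod m)))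
        - 1) :=
  h_polynomial_divisibility_general k m hm a n hn
end

section
/- Let P be a simple n-polytope obtained from a simple n-polytope Q by forgetting one of the defining inequalities (so Q has facets F₁,...,F_{m-1}, P has facets F₁,...,F_m, and every vertex of P either is a vertex of Q or lies on F_m and is connected by an edge of P to a vertex of Q). If M is an (m-1)×s integer matrix such that for every vertex F_{i₁}∩...∩F_{i_n} of Q, the columns of M with those n rows deleted extend to a basis of Z^{m-1-n}, then the m×s matrix M̂ obtained by appending a zero row has the property that for every vertex of P, deleting the corresponding n rows leaves columns extending to a basis of Z^{m-n}. Consequently s(P) ≥ s(Q). -/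
/-- Buchstaber number in the matrix characterization: the maximal `s ≤ #facets` for which
there is a matrix `M` (rows indexed by facets, `s` columns, integer entries) such that
for every vertex `V` (the set of facets containing it), the columns of `M` with the rows
of `V` deleted extend to a basis of the corresponding free module. -/
noncomputable def buch (ι : Type) [Fintype ι] [DecidableEq ι]
    (verts : Finset (Finset ι)) : ℕ :=
  sSup {s : ℕ | s ≤ Fintype.card ι ∧ ∃ M : ι → Fin s → ℤ,
    ∀ V ∈ verts, IsPartOfBasis ℤ (fun j : Fin s => fun i : {i : ι // i ∉ V} => M i.1 j)}

namespace IsPartOfBasis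

variable {R : Type} [CommRing R] {N N' : Type} [AddCommGroup N] [Module R N]
  [AddCommGroup N'] [Module R N'] {ι : Type}

theorem of_isEmpty [IsEmpty ι] [Module.Free R N] (v : ι → N) : IsPartOfBasis R v :=
  ⟨_, (Module.Free.chooseBasis R N).reindex (Equiv.emptySum ι _).symm, isEmptyElim⟩

theorem map {v : ι → N} (hv : IsPartOfBasis R v) (L : N ≃ₗ[R] N') :
    IsPartOfBasis R (fun i => L (v i)) := by
  obtain ⟨κ, b, hb⟩ := hv
  exact ⟨κ, b.map L, fun i => by simp [hb]⟩

/-- The shear `(x, y) ↦ (x, y + φ x)`, with `φ` sending `v i` to `c i` and the complementary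
basis vectors to `0`, carries the basis `b × b'` to one extending `(v i, c i)`. -/
theorem prodMk [Module.Free R N'] {v : ι → N} (hv : IsPartOfBasis R v) (c : ι → N') :
    IsPartOfBasis R (fun i => (v i, c i)) := by
  obtain ⟨κ, b, hb⟩ := hv
  let φ : N →ₗ[R] N' := b.constr R (Sum.elim c 0)
  let shear := (LinearEquiv.refl R N).skewProd (LinearEquiv.refl R N') φ
  refine ⟨κ ⊕ _, ((b.prod (Module.Free.chooseBasis R N')).map shear).reindex
    (Equiv.sumAssoc ι κ _), fun i => ?_⟩
  simp [shear, φ, ← hb i]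

theorem sumElim {β β' : Type} [Finite β'] {v : ι → β → R} (hv : IsPartOfBasis R v)
    (c : ι → β' → R) : IsPartOfBasis R (fun i => Sum.elim (v i) (c i)) :=
  (hv.prodMk c).map (LinearEquiv.sumArrowLequivProdArrow β β' R R).symm

theorem comp_equiv {β γ : Type} {v : ι → β → R} (hv : IsPartOfBasis R v) (e : γ ≃ β) :
    IsPartOfBasis R (fun i => v i ∘ e) :=
  hv.map (LinearEquiv.funCongrLeft R R e)

theorem compl_of_subset {α : Type} {U T : Finset α} (hUT : U ⊆ T) {v : ι → α → R}
    (hv : IsPartOfBasis R (fun j (i : {i // i ∉ T}) => v j i)) :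
    IsPartOfBasis R (fun j (i : {i // i ∉ U}) => v j i) := by
  classical
  let p : {i // i ∉ U} → Prop := fun i => i.1 ∉ T
  have : Finite {i // ¬ p i} :=
    Finite.of_injective (fun i => (⟨i.1.1, not_not.mp i.2⟩ : T)) fun i i' h => by
      simpa [Subtype.ext_iff] using h
  let e : {i // i ∉ U} ≃ {i // i ∉ T} ⊕ {i // ¬ p i} :=
    (Equiv.sumCompl p).symm.trans <| Equiv.sumCongr
      (Equiv.subtypeSubtypeEquivSubtype fun h => mt (@hUT _) h) (Equiv.refl _)
  convert (hv.sumElim fun j i => v j i.1.1).comp_equiv e using 2 with j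
  funext i
  by_cases hi : p i <;>
    simp [e, Equiv.sumCompl, hi, Equiv.subtypeSubtypeEquivSubtype,
      Equiv.subtypeSubtypeEquivSubtypeInter, Equiv.subtypeSubtypeEquivSubtypeExists]

end IsPartOfBasis

section ForgetInequality

variable {α : Type} [DecidableEq α] {a : α}

theorem isPartOfBasis_compl_insert_map_subtype {R ι : Type} [CommRing R]
    {W : Finset {i // i ≠ a}} {M : {i // i ≠ a} → ι → R}
    (hM : IsPartOfBasis R (fun j (i : {i // i ∉ W}) => M i.1 j)) :
    IsPartOfBasis R (fun j (i : {i // i ∉ insert a (W.map (Function.Embedding.subtype _))}) =>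
      if h : i.1 = a then 0 else M ⟨i.1, h⟩ j) := by
  have hmem (i : α) : i ∉ insert a (W.map (Function.Embedding.subtype _)) ↔
      ∃ h : i ≠ a, ⟨i, h⟩ ∉ W := by
    by_cases hi : i = a <;> simp [hi]
  convert hM.comp_equiv ((Equiv.subtypeEquivRight hmem).trans
    (Equiv.subtypeSubtypeEquivSubtypeExists (· ≠ a) (· ∉ W)).symm) using 2 with j
  funext i
  simp [Equiv.subtypeSubtypeEquivSubtypeExists, Equiv.subtypeEquivRight_apply,
    ((hmem i).mp i.2).1]

theorem exists_subset_insert_map_subtype {verts : Finset (Finset {i // i ≠ a})} {V : Finset α}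
    (hV : (a ∉ V ∧ V.subtype (· ≠ a) ∈ verts) ∨
      (a ∈ V ∧ ∃ W ∈ verts, (V.erase a).subtype (· ≠ a) ⊆ W)) :
    ∃ W ∈ verts, V ⊆ insert a (W.map (Function.Embedding.subtype _)) := by
  rcases hV with ⟨-, hW⟩ | ⟨-, W, hW, hsub⟩
  · refine ⟨_, hW, fun i hi => ?_⟩
    by_cases h : i = a <;> simp [h, hi]
  · refine ⟨W, hW, fun i hi => ?_⟩
    by_cases h : i = a
    · simp [h]
    · simpa [h] using hsub (by simp [h, hi] : ⟨i, h⟩ ∈ (V.erase a).subtype (· ≠ a))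

end ForgetInequality

theorem buch_le_buch {ι ι' : Type} [Fintype ι] [DecidableEq ι] [Fintype ι'] [DecidableEq ι']
    {verts : Finset (Finset ι)} {verts' : Finset (Finset ι')}
    (hcard : Fintype.card ι ≤ Fintype.card ι')
    (h : ∀ s (M : ι → Fin s → ℤ),
      (∀ V ∈ verts, IsPartOfBasis ℤ (fun j (i : {i // i ∉ V}) => M i.1 j)) →
      ∃ M' : ι' → Fin s → ℤ, ∀ V ∈ verts', IsPartOfBasis ℤ (fun j (i : {i // i ∉ V}) => M' i.1 j)) :
    buch ι verts ≤ buch ι' verts' := by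
  apply csSup_le_csSup
  · exact ⟨Fintype.card ι', fun s hs => hs.1⟩
  · exact ⟨0, Nat.zero_le _, fun _ => finZeroElim, fun _ _ => .of_isEmpty _⟩
  · rintro s ⟨hs, M, hM⟩
    exact ⟨hs.trans hcard, h s M hM⟩

theorem buchstaber_of_forgetting_inequality_general (m n s : ℕ) (f₀ : Fin m)
    (vertsP : Finset (Finset (Fin m)))
    (vertsQ : Finset (Finset {i : Fin m // i ≠ f₀}))
    (hP : ∀ V ∈ vertsP, V.card = n ∧
      ((f₀ ∉ V ∧ V.subtype (· ≠ f₀) ∈ vertsQ) ∨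
       (f₀ ∈ V ∧ ∃ W ∈ vertsQ, (V.erase f₀).subtype (· ≠ f₀) ⊆ W)))
    (M : {i : Fin m // i ≠ f₀} → Fin s → ℤ)
    (hM : ∀ W ∈ vertsQ, IsPartOfBasis ℤ
      (fun j : Fin s => fun i : {i : {i : Fin m // i ≠ f₀} // i ∉ W} => M i.1 j)) :
    (∀ V ∈ vertsP, IsPartOfBasis ℤ
      (fun j : Fin s => fun i : {i : Fin m // i ∉ V} =>
        if h : i.1 = f₀ then 0 else M ⟨i.1, h⟩ j)) ∧
    buch {i : Fin m // i ≠ f₀} vertsQ ≤ buch (Fin m) vertsP := by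
  have extend (s : ℕ) (M : {i : Fin m // i ≠ f₀} → Fin s → ℤ)
      (hM : ∀ W ∈ vertsQ, IsPartOfBasis ℤ (fun j (i : {i // i ∉ W}) => M i.1 j))
      (V : Finset (Fin m)) (hV : V ∈ vertsP) :
      IsPartOfBasis ℤ (fun j (i : {i // i ∉ V}) => if h : i.1 = f₀ then 0 else M ⟨i.1, h⟩ j) := by
    obtain ⟨W, hW, hVW⟩ := exists_subset_insert_map_subtype (hP V hV).2
    exact (isPartOfBasis_compl_insert_map_subtype (hM W hW)).compl_of_subset
      (v := fun j i => if h : i = f₀ then 0 else M ⟨i, h⟩ j) hVW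
  refine ⟨extend s M hM, buch_le_buch (Fintype.card_subtype_le _) fun s M hM => ?_⟩
  exact ⟨fun i j => if h : i = f₀ then 0 else M ⟨i, h⟩ j, extend s M hM⟩

/-- If the simple polytope `P` is obtained from `Q` by forgetting one inequality (with new
facet `f₀`), then any matrix `M` witnessing a freely acting subtorus for `Q` extends by a
zero row to a witness for `P`; consequently `s(Q) ≤ s(P)`. -/
theorem buchstaber_of_forgetting_inequality (m n s : ℕ) (hn : 0 < n) (f₀ : Fin m)
    (vertsP : Finset (Finset (Fin m)))
    (vertsQ : Finset (Finset {i : Fin m // i ≠ f₀}))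
    (hPne : vertsP.Nonempty) (hQne : vertsQ.Nonempty)
    (hQcard : ∀ W ∈ vertsQ, W.card = n)
    (hP : ∀ V ∈ vertsP, V.card = n ∧
      ((f₀ ∉ V ∧ V.subtype (· ≠ f₀) ∈ vertsQ) ∨
       (f₀ ∈ V ∧ ∃ W ∈ vertsQ, (V.erase f₀).subtype (· ≠ f₀) ⊆ W)))
    (M : {i : Fin m // i ≠ f₀} → Fin s → ℤ)
    (hM : ∀ W ∈ vertsQ, IsPartOfBasis ℤ
      (fun j : Fin s => fun i : {i : {i : Fin m // i ≠ f₀} // i ∉ W} => M i.1 j)) :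
    (∀ V ∈ vertsP, IsPartOfBasis ℤ
      (fun j : Fin s => fun i : {i : Fin m // i ∉ V} =>
        if h : i.1 = f₀ then 0 else M ⟨i.1, h⟩ j)) ∧
    buch {i : Fin m // i ≠ f₀} vertsQ ≤ buch (Fin m) vertsP :=
  buchstaber_of_forgetting_inequality_general m n s f₀ vertsP vertsQ hP M hM
end

section
/- Let P, Q be simple polytopes of dimensions n₁, n₂ with m₁, m₂ facets. Then s(P) + s(Q) ≤ s(P × Q) ≤ s(P) + s(Q) + min{m₁ − n₁ − s(P), m₂ − n₂ − s(Q)}, where s denotes the Buchstaber number in its matrix characterization: s(P) is the maximal s admitting an m×s integer matrix such that for each vertex, the columns of the matrix with the n rows of that vertex's facets deleted extend to a basis of Z^{m-n}. -/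
/-- The vertices of the product polytope `P × Q`: pairs of vertices. -/
noncomputable def prodVerts (m₁ m₂ : ℕ) (vertsP : Finset (Finset (Fin m₁)))
    (vertsQ : Finset (Finset (Fin m₂))) : Finset (Finset (Fin m₁ ⊕ Fin m₂)) :=
  (vertsP ×ˢ vertsQ).image
    (fun p => p.1.map ⟨Sum.inl, Sum.inl_injective⟩ ∪ p.2.map ⟨Sum.inr, Sum.inr_injective⟩)

open Matrix

namespace Matrix

def deleteRows {ι κ R : Type*} (M : Matrix ι κ R) (V : Finset ι) : Matrix {i // i ∉ V} κ R :=
  M.submatrix Subtype.val id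

def HasLeftInverse {R ρ κ : Type*} [Semiring R] [Fintype ρ] [DecidableEq κ]
    (A : Matrix ρ κ R) : Prop :=
  ∃ B : Matrix κ ρ R, B * A = 1

section Semiring

variable {R ρ ρ' κ κ' τ : Type*} [Semiring R] [Fintype ρ] [Fintype ρ'] [DecidableEq κ]
  [DecidableEq κ']

theorem HasLeftInverse.submatrix_equiv {A : Matrix ρ κ R} (hA : A.HasLeftInverse)
    (e₁ : ρ' ≃ ρ) (e₂ : κ' ≃ κ) : (A.submatrix e₁ e₂).HasLeftInverse := by
  obtain ⟨B, hB⟩ := hA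
  exact ⟨B.submatrix e₂ e₁, by rw [submatrix_mul_equiv, hB, submatrix_one_equiv]⟩

theorem hasLeftInverse_submatrix_equiv_iff (A : Matrix ρ κ R) (e₁ : ρ' ≃ ρ) (e₂ : κ' ≃ κ) :
    (A.submatrix e₁ e₂).HasLeftInverse ↔ A.HasLeftInverse := by
  refine ⟨fun h => ?_, fun h => h.submatrix_equiv e₁ e₂⟩
  simpa using h.submatrix_equiv e₁.symm e₂.symm

theorem HasLeftInverse.fromBlocks {A : Matrix ρ κ R} {A' : Matrix ρ' κ' R}
    (hA : A.HasLeftInverse) (hA' : A'.HasLeftInverse) :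
    (Matrix.fromBlocks A 0 0 A').HasLeftInverse := by
  obtain ⟨B, hB⟩ := hA
  obtain ⟨B', hB'⟩ := hA'
  exact ⟨Matrix.fromBlocks B 0 0 B', by simp [fromBlocks_multiply, hB, hB']⟩

theorem HasLeftInverse.fromRows_comm {A : Matrix ρ κ R} {A' : Matrix ρ' κ R}
    (h : (fromRows A A').HasLeftInverse) : (fromRows A' A).HasLeftInverse := by
  have : fromRows A' A = (fromRows A A').submatrix (Equiv.sumComm ρ' ρ) (Equiv.refl κ) := by
    ext (i | i) j <;> rfl
  exact this ▸ h.submatrix_equiv _ _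

theorem HasLeftInverse.mul_of_fromRows [Fintype κ] [DecidableEq τ] {A : Matrix ρ κ R}
    {B : Matrix ρ' κ R} {K : Matrix κ τ R} (h : (fromRows A B).HasLeftInverse)
    (hK : K.HasLeftInverse) (hBK : B * K = 0) : (A * K).HasLeftInverse := by
  obtain ⟨G, hG⟩ := h
  obtain ⟨C, hC⟩ := hK
  have hGAB : G.toCols₁ * A + G.toCols₂ * B = 1 := by
    rw [← fromCols_mul_fromRows, fromCols_toCols, hG]
  refine ⟨C * G.toCols₁, ?_⟩
  calc C * G.toCols₁ * (A * K) = C * ((G.toCols₁ * A + G.toCols₂ * B) * K) := by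
        simp only [Matrix.add_mul, Matrix.mul_assoc, hBK, Matrix.mul_zero, add_zero]
    _ = 1 := by rw [hGAB, Matrix.one_mul, hC]

end Semiring

theorem HasLeftInverse.card_le {R ρ κ : Type*} [CommSemiring R] [StrongRankCondition R]
    [Fintype ρ] [Fintype κ] [DecidableEq κ] {A : Matrix ρ κ R} (h : A.HasLeftInverse) :
    Fintype.card κ ≤ Fintype.card ρ := by
  obtain ⟨B, hB⟩ := h
  calc Fintype.card κ = (B * A).rank := by rw [hB, rank_one]
    _ ≤ A.rank := rank_mul_le_right B A
    _ ≤ Fintype.card ρ := rank_le_card_height A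

section PrincipalIdealDomain

variable {R : Type} [CommRing R] [IsDomain R] [IsPrincipalIdealRing R] {ρ κ : Type} [Fintype ρ]
  [Fintype κ] [DecidableEq κ]

theorem isPartOfBasis_transpose_iff (A : Matrix ρ κ R) :
    IsPartOfBasis R Aᵀ ↔ A.HasLeftInverse := by
  classical
  constructor
  · rintro ⟨_, b, hb⟩
    let g : (ρ → R) →ₗ[R] κ → R := LinearMap.pi fun j => b.coord (Sum.inl j)
    have hg : g ∘ₗ toLin' A = LinearMap.id := by
      ext j j'
      have hcol : A.col j = b (Sum.inl j) := (hb j).symm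
      simp [g, hcol, Pi.single_apply, Finsupp.single_apply, eq_comm]
    refine ⟨LinearMap.toMatrix' g, ?_⟩
    rw [← LinearMap.toMatrix'_toLin' A, ← LinearMap.toMatrix'_comp, hg, LinearMap.toMatrix'_id]
  · rintro ⟨B, hB⟩
    set L := toLin' A
    have hBL : Function.LeftInverse (toLin' B) L := fun x => by
      rw [← LinearMap.comp_apply, ← toLin'_mul, hB, toLin'_one, LinearMap.id_apply]
    let p : (ρ → R) →ₗ[R] LinearMap.range L := L.rangeRestrict ∘ₗ toLin' B
    have hp : ∀ x : LinearMap.range L, p x = x := by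
      rintro ⟨_, y, rfl⟩
      exact Subtype.ext (congrArg L (hBL y))
    refine ⟨_, (((Pi.basisFun R κ).map (LinearEquiv.ofInjective L hBL.injective)).prod
      (Module.Free.chooseBasis R (LinearMap.ker p))).map
        (Submodule.prodEquivOfIsCompl _ _ (LinearMap.isCompl_of_proj hp)), fun j => ?_⟩
    ext i
    simp [L]

theorem exists_hasLeftInverse_mul_eq_zero (B : Matrix ρ κ R) :
    ∃ (t : ℕ) (K : Matrix κ (Fin t) R), K.HasLeftInverse ∧ B * K = 0 ∧
      Fintype.card κ ≤ t + Fintype.card ρ := by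
  classical
  set N := LinearMap.ker (toLin' B)
  -- the quotient embeds in a free module, so it is free and `N` is a direct summand
  have : Module.Free R ((κ → R) ⧸ N) :=
    Module.Free.of_equiv (toLin' B).quotKerEquivRange.symm
  obtain ⟨σ, hσ⟩ := Module.projective_lifting_property N.mkQ LinearMap.id N.mkQ_surjective
  let p : (κ → R) →ₗ[R] N := LinearMap.codRestrict N (LinearMap.id - σ ∘ₗ N.mkQ) fun x => by
    refine (Submodule.Quotient.mk_eq_zero N).1 ?_
    simp only [LinearMap.sub_apply, LinearMap.comp_apply, Submodule.Quotient.mk_sub, sub_eq_zero]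
    exact congr($hσ (N.mkQ x)).symm
  have hp : p ∘ₗ N.subtype = LinearMap.id := by
    ext x : 1
    exact Subtype.ext (by simp [p, (Submodule.Quotient.mk_eq_zero N).2 x.2])
  let e := (Module.finBasis R N).equivFun
  refine ⟨Module.finrank R N, LinearMap.toMatrix' (N.subtype ∘ₗ e.symm.toLinearMap),
    ⟨LinearMap.toMatrix' (e.toLinearMap ∘ₗ p), ?_⟩, ?_, ?_⟩
  · rw [← LinearMap.toMatrix'_comp, LinearMap.comp_assoc, ← LinearMap.comp_assoc _ N.subtype, hp,
      LinearMap.id_comp, LinearEquiv.comp_symm, LinearMap.toMatrix'_id]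
  · rw [← LinearMap.toMatrix'_toLin' B, ← LinearMap.toMatrix'_comp, ← LinearMap.comp_assoc,
      LinearMap.comp_ker_subtype, LinearMap.zero_comp, map_zero]
  · have hrank := N.finrank_quotient_add_finrank
    rw [(toLin' B).quotKerEquivRange.finrank_eq, Module.finrank_fintype_fun_eq_card] at hrank
    have := Submodule.finrank_le (LinearMap.range (toLin' B))
    rw [Module.finrank_fintype_fun_eq_card] at this
    omega

end PrincipalIdealDomain

end Matrix

section Buchstaber

variable {ι κ : Type} [Fintype ι] [DecidableEq ι]

def IsBuchMatrix [DecidableEq κ] (verts : Finset (Finset ι)) (M : Matrix ι κ ℤ) : Prop :=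
  ∀ V ∈ verts, (M.deleteRows V).HasLeftInverse

variable {verts : Finset (Finset ι)}

theorem buch_eq_sSup :
    buch ι verts =
      sSup {s | s ≤ Fintype.card ι ∧ ∃ M : Matrix ι (Fin s) ℤ, IsBuchMatrix verts M} := by
  simp only [buch, IsBuchMatrix, ← isPartOfBasis_transpose_iff]
  rfl

theorem le_buch {s : ℕ} (hs : s ≤ Fintype.card ι) {M : Matrix ι (Fin s) ℤ}
    (hM : IsBuchMatrix verts M) : s ≤ buch ι verts :=
  buch_eq_sSup (verts := verts) ▸ le_csSup ⟨Fintype.card ι, fun _ h => h.1⟩ ⟨hs, M, hM⟩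

theorem exists_isBuchMatrix_buch (verts : Finset (Finset ι)) :
    ∃ M : Matrix ι (Fin (buch ι verts)) ℤ, IsBuchMatrix verts M := by
  rw [buch_eq_sSup]
  exact (Nat.sSup_mem (s := {s | s ≤ _ ∧ ∃ M : Matrix ι (Fin s) ℤ, IsBuchMatrix verts M})
    ⟨0, Nat.zero_le _, 0, fun _ _ => ⟨0, Subsingleton.elim _ _⟩⟩
    ⟨Fintype.card ι, fun _ h => h.1⟩).2

theorem IsBuchMatrix.card_le [Fintype κ] [DecidableEq κ] {M : Matrix ι κ ℤ}
    (hM : IsBuchMatrix verts M) {V : Finset ι} (hV : V ∈ verts) :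
    Fintype.card κ ≤ Fintype.card {i // i ∉ V} :=
  (hM V hV).card_le

theorem IsBuchMatrix.submatrix_equiv {κ' : Type} [DecidableEq κ] [DecidableEq κ']
    {M : Matrix ι κ ℤ} (hM : IsBuchMatrix verts M) (e : κ' ≃ κ) :
    IsBuchMatrix verts (M.submatrix id e) :=
  fun V hV => (hM V hV).submatrix_equiv (Equiv.refl _) e

theorem le_buch_of_isBuchMatrix (hne : verts.Nonempty) {s : ℕ} {M : Matrix ι (Fin s) ℤ}
    (hM : IsBuchMatrix verts M) : s ≤ buch ι verts := by
  obtain ⟨V, hV⟩ := hne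
  refine le_buch ?_ hM
  simpa using (hM.card_le hV).trans (Fintype.card_subtype_le _)

theorem buch_le_card_compl {V : Finset ι} (hV : V ∈ verts) :
    buch ι verts ≤ Fintype.card {i // i ∉ V} := by
  obtain ⟨M, hM⟩ := exists_isBuchMatrix_buch verts
  simpa using hM.card_le hV

theorem le_buch_add_card_of_fromRows {ρ : Type} [Fintype ρ] (hne : verts.Nonempty) {s : ℕ}
    (A : Matrix ι (Fin s) ℤ) (B : Matrix ρ (Fin s) ℤ)
    (h : ∀ V ∈ verts, (fromRows (A.deleteRows V) B).HasLeftInverse) :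
    s ≤ buch ι verts + Fintype.card ρ := by
  obtain ⟨t, K, hK, hBK, hcard⟩ := exists_hasLeftInverse_mul_eq_zero B
  have hAK : IsBuchMatrix verts (A * K) := fun V hV => (h V hV).mul_of_fromRows hK hBK
  have := le_buch_of_isBuchMatrix hne hAK
  simp only [Fintype.card_fin] at hcard
  omega

end Buchstaber

section Product

theorem hasLeftInverse_deleteRows_map_union_map_iff {α β κ R : Type*} [Fintype α] [Fintype β]
    [DecidableEq α] [DecidableEq β] [DecidableEq κ] [Semiring R] (M : Matrix (α ⊕ β) κ R)
    (V : Finset α) (W : Finset β) :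
    (M.deleteRows
        (V.map ⟨Sum.inl, Sum.inl_injective⟩ ∪ W.map ⟨Sum.inr, Sum.inr_injective⟩)).HasLeftInverse ↔
      (fromRows (M.toRows₁.deleteRows V) (M.toRows₂.deleteRows W)).HasLeftInverse := by
  let e : {x // x ∉ V.map ⟨Sum.inl, Sum.inl_injective⟩ ∪ W.map ⟨Sum.inr, Sum.inr_injective⟩} ≃
      {a // a ∉ V} ⊕ {b // b ∉ W} :=
    (Equiv.subtypeEquivRight (by rintro (a | b) <;> simp)).trans
      (Equiv.subtypeSum (p := Sum.elim (· ∉ V) (· ∉ W)))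
  rw [← hasLeftInverse_submatrix_equiv_iff _ e (Equiv.refl κ)]
  congr!
  ext ⟨a | b, h⟩ j <;> rfl

variable {m₁ m₂ : ℕ} {vertsP : Finset (Finset (Fin m₁))} {vertsQ : Finset (Finset (Fin m₂))}

theorem isBuchMatrix_prodVerts_iff {κ : Type} [DecidableEq κ] (M : Matrix (Fin m₁ ⊕ Fin m₂) κ ℤ) :
    IsBuchMatrix (prodVerts m₁ m₂ vertsP vertsQ) M ↔ ∀ V ∈ vertsP, ∀ W ∈ vertsQ,
      (fromRows (M.toRows₁.deleteRows V) (M.toRows₂.deleteRows W)).HasLeftInverse := by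
  simp only [IsBuchMatrix, prodVerts, Finset.forall_mem_image, Finset.mem_product, and_imp,
    Prod.forall, hasLeftInverse_deleteRows_map_union_map_iff]
  exact ⟨fun h V hV W hW => h V W hV hW, fun h V W hV hW => h V hV W hW⟩

theorem IsBuchMatrix.fromBlocks {κ₁ κ₂ : Type} [DecidableEq κ₁] [DecidableEq κ₂]
    {M₁ : Matrix (Fin m₁) κ₁ ℤ} {M₂ : Matrix (Fin m₂) κ₂ ℤ} (h₁ : IsBuchMatrix vertsP M₁)
    (h₂ : IsBuchMatrix vertsQ M₂) :
    IsBuchMatrix (prodVerts m₁ m₂ vertsP vertsQ) (Matrix.fromBlocks M₁ 0 0 M₂) := by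
  refine (isBuchMatrix_prodVerts_iff _).2 fun V hV W hW => ?_
  have : fromRows ((Matrix.fromBlocks M₁ 0 0 M₂).toRows₁.deleteRows V)
      ((Matrix.fromBlocks M₁ 0 0 M₂).toRows₂.deleteRows W) =
      Matrix.fromBlocks (M₁.deleteRows V) 0 0 (M₂.deleteRows W) := by
    ext (i | i) (j | j) <;> rfl
  exact this ▸ (h₁ V hV).fromBlocks (h₂ W hW)

end Product

theorem buchstaber_of_product_general (m₁ m₂ n₁ n₂ : ℕ)
    (vertsP : Finset (Finset (Fin m₁))) (vertsQ : Finset (Finset (Fin m₂)))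
    (hPne : vertsP.Nonempty) (hQne : vertsQ.Nonempty)
    (hP : ∀ V ∈ vertsP, V.card = n₁) (hQ : ∀ W ∈ vertsQ, W.card = n₂) :
    buch (Fin m₁) vertsP + buch (Fin m₂) vertsQ ≤
        buch (Fin m₁ ⊕ Fin m₂) (prodVerts m₁ m₂ vertsP vertsQ) ∧
      buch (Fin m₁ ⊕ Fin m₂) (prodVerts m₁ m₂ vertsP vertsQ) ≤
        buch (Fin m₁) vertsP + buch (Fin m₂) vertsQ +
          min (m₁ - n₁ - buch (Fin m₁) vertsP) (m₂ - n₂ - buch (Fin m₂) vertsQ) := by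
  obtain ⟨V₀, hV₀⟩ := hPne
  obtain ⟨W₀, hW₀⟩ := hQne
  obtain ⟨MP, hMP⟩ := exists_isBuchMatrix_buch vertsP
  obtain ⟨MQ, hMQ⟩ := exists_isBuchMatrix_buch vertsQ
  obtain ⟨MS, hMS⟩ := exists_isBuchMatrix_buch (prodVerts m₁ m₂ vertsP vertsQ)
  have hPQne : (prodVerts m₁ m₂ vertsP vertsQ).Nonempty :=
    (Finset.Nonempty.product ⟨V₀, hV₀⟩ ⟨W₀, hW₀⟩).image _
  have hsP := buch_le_card_compl hV₀
  have hsQ := buch_le_card_compl hW₀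
  have hlower := le_buch_of_isBuchMatrix hPQne
    ((hMP.fromBlocks hMQ).submatrix_equiv finSumFinEquiv.symm)
  have hupperP := le_buch_add_card_of_fromRows ⟨V₀, hV₀⟩ MS.toRows₁ (MS.toRows₂.deleteRows W₀)
    fun V hV => (isBuchMatrix_prodVerts_iff MS).1 hMS V hV W₀ hW₀
  have hupperQ := le_buch_add_card_of_fromRows ⟨W₀, hW₀⟩ MS.toRows₂ (MS.toRows₁.deleteRows V₀)
    fun W hW => ((isBuchMatrix_prodVerts_iff MS).1 hMS V₀ hV₀ W hW).fromRows_comm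
  simp only [Fintype.card_subtype_compl, Fintype.card_fin, Fintype.card_coe, hP V₀ hV₀,
    hQ W₀ hW₀] at hsP hsQ hupperP hupperQ
  omega

/-- `s(P) + s(Q) ≤ s(P × Q) ≤ s(P) + s(Q) + min{m₁-n₁-s(P), m₂-n₂-s(Q)}`. -/
theorem buchstaber_of_product (m₁ m₂ n₁ n₂ : ℕ) (hn₁ : 0 < n₁) (hn₂ : 0 < n₂)
    (vertsP : Finset (Finset (Fin m₁))) (vertsQ : Finset (Finset (Fin m₂)))
    (hPne : vertsP.Nonempty) (hQne : vertsQ.Nonempty)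
    (hP : ∀ V ∈ vertsP, V.card = n₁) (hQ : ∀ W ∈ vertsQ, W.card = n₂) :
    buch (Fin m₁) vertsP + buch (Fin m₂) vertsQ ≤
        buch (Fin m₁ ⊕ Fin m₂) (prodVerts m₁ m₂ vertsP vertsQ) ∧
      buch (Fin m₁ ⊕ Fin m₂) (prodVerts m₁ m₂ vertsP vertsQ) ≤
        buch (Fin m₁) vertsP + buch (Fin m₂) vertsQ +
          min (m₁ - n₁ - buch (Fin m₁) vertsP) (m₂ - n₂ - buch (Fin m₂) vertsQ) :=
  buchstaber_of_product_general m₁ m₂ n₁ n₂ vertsP vertsQ hPne hQne hP hQ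
end

section
/- Let P be a flag simple n-polytope with m facets and chromatic number γ(P) (minimal number of colors for facets so that adjacent facets get different colors). Then γ(P) ≤ ⌊(m−n)/2⌋ + n. -/
/-- Chromatic bound for flag simple polytopes: the facets of `P` are `Fin m`, and
`K` is the set of all collections of facets with nonempty common intersection
(the face complex of the dual boundary complex).  Hypotheses: `K` is downward closed,
each facet is nonempty, every face involves at most `n` facets (simplicity), and `P` is
flag (pairwise intersecting facets have a common point).  Then the facets can be properly
colored with `⌊(m-n)/2⌋ + n` colors, i.e. `γ(P) ≤ ⌊(m-n)/2⌋ + n`. -/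
theorem chromatic_bound_of_flag (m n : ℕ) (hn : 0 < n) (hnm : n ≤ m)
    (K : Finset (Finset (Fin m)))
    (hdown : ∀ S ∈ K, ∀ T ⊆ S, T ∈ K)
    (hsing : ∀ i : Fin m, ({i} : Finset (Fin m)) ∈ K)
    (hcard : ∀ S ∈ K, S.card ≤ n)
    (hflag : ∀ S : Finset (Fin m),
      (∀ i ∈ S, ∀ j ∈ S, ({i, j} : Finset (Fin m)) ∈ K) → S ∈ K) :
    ∃ col : Fin m → Fin ((m - n) / 2 + n),
      ∀ i j : Fin m, i ≠ j → ({i, j} : Finset (Fin m)) ∈ K → col i ≠ col j := by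
  classical
  set g : ℕ → ℕ := fun k => if k ≤ n then k else (k - n) / 2 + n with hg
  have gstep : ∀ k, n < k → g (k - 2) + 1 ≤ g k := by
    intro k hk
    simp only [hg]
    split_ifs <;> omega
  have key : ∀ S : Finset (Fin m), ∃ col : Fin m → ℕ,
      (∀ i ∈ S, col i < g S.card) ∧
      (∀ i ∈ S, ∀ j ∈ S, i ≠ j → ({i, j} : Finset (Fin m)) ∈ K → col i ≠ col j) := by
    intro S
    induction S using Finset.strongInductionOn with
    | _ S ih =>
      by_cases hb : S.card ≤ n
      · refine ⟨fun x => if h : x ∈ S then (S.equivFin ⟨x, h⟩ : ℕ) else 0, ?_, ?_⟩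
        · intro i hi
          simp only [dif_pos hi, hg, if_pos hb]
          exact (S.equivFin ⟨i, hi⟩).isLt
        · intro i hi j hj hij _
          simp only [dif_pos hi, dif_pos hj]
          intro h
          apply hij
          have h2 := S.equivFin.injective (Fin.ext h)
          exact congrArg Subtype.val h2
      · push_neg at hb
        have hne : ∃ i ∈ S, ∃ j ∈ S, i ≠ j ∧ ({i, j} : Finset (Fin m)) ∉ K := by
          by_contra hc
          push_neg at hc
          have hSK : S ∈ K := by
            apply hflag
            intro i hi j hj
            by_cases hij : i = j
            · subst hij; simpa using hsing i
            · exact hc i hi j hj hij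
          have := hcard S hSK
          omega
        obtain ⟨i, hi, j, hj, hij, hKij⟩ := hne
        set T := S \ {i, j} with hT
        have hTS : T ⊂ S := by
          constructor
          · exact Finset.sdiff_subset
          · intro hsub
            have : i ∈ T := hsub hi
            simp [hT] at this
        have hpair : ({i, j} : Finset (Fin m)) ⊆ S := by
          intro x hx
          simp only [Finset.mem_insert, Finset.mem_singleton] at hx
          rcases hx with rfl | rfl <;> assumption
        have hTcard : T.card = S.card - 2 := by
          rw [hT, Finset.card_sdiff_of_subset hpair, Finset.card_pair hij]
        obtain ⟨col, hcb, hcp⟩ := ih T hTS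
        rw [hTcard] at hcb
        have hst := gstep S.card hb
        refine ⟨fun x => if x = i ∨ x = j then g (S.card - 2) else col x, ?_, ?_⟩
        · intro x hx
          by_cases hxij : x = i ∨ x = j
          · simp only [if_pos hxij]; omega
          · simp only [if_neg hxij]
            have hxT : x ∈ T := by
              push_neg at hxij
              simp [hT, hx, hxij]
            have := hcb x hxT
            omega
        · intro x hx y hy hxy hKxy
          have memT : ∀ z ∈ S, ¬(z = i ∨ z = j) → z ∈ T := by
            intro z hz hzij
            push_neg at hzij
            simp [hT, hz, hzij]
          by_cases hxij : x = i ∨ x = j <;> by_cases hyij : y = i ∨ y = j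
          · exfalso
            apply hKij
            rcases hxij with rfl | rfl <;> rcases hyij with rfl | rfl
            · exact absurd rfl hxy
            · exact hKxy
            · rwa [Finset.pair_comm] at hKxy
            · exact absurd rfl hxy
          · simp only [if_pos hxij, if_neg hyij]
            have := hcb y (memT y hy hyij)
            omega
          · simp only [if_neg hxij, if_pos hyij]
            have := hcb x (memT x hx hxij)
            omega
          · simp only [if_neg hxij, if_neg hyij]
            exact hcp x (memT x hx hxij) y (memT y hy hyij) hxy hKxy
  obtain ⟨col, hcb, hcp⟩ := key Finset.univ
  have hcu : (Finset.univ : Finset (Fin m)).card = m := by simp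
  have hgm : g m = (m - n) / 2 + n := by
    simp only [hg]; split_ifs <;> omega
  have hlt : ∀ x : Fin m, col x < (m - n) / 2 + n := by
    intro x
    have := hcb x (Finset.mem_univ x)
    rwa [hcu, hgm] at this
  refine ⟨fun x => ⟨col x, hlt x⟩, ?_⟩
  intro a b hab hK
  have := hcp a (Finset.mem_univ a) b (Finset.mem_univ b) hab hK
  simpa [Fin.ext_iff] using this
end
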